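/- arXiv:2404.04499 — 8 statements merged into one kernel-verified Lean document; each statement's English description precedes it below -/
import Mathlib

section
/- Let f and g be probability distributions on ℕ. Then the first-order Toscani distance is bounded by the first-order Wasserstein distance: D_1(f,g) ≤ W_1(f,g). -/
open scoped ENNReal

noncomputable section

/-- `f` is a probability distribution on `ℕ`. -/
def IsProbN (f : ℕ → ℝ) : Prop := (∀ n, 0 ≤ f n) ∧ HasSum f 1

/-- `π` is a coupling of the probability distributions `f` and `g` on `ℕ`. -/
def IsCouplingN (π : ℕ → ℕ → ℝ) (f g : ℕ → ℝ) : Prop :=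
  (∀ i j, 0 ≤ π i j) ∧ (∀ i, HasSum (fun j => π i j) (f i)) ∧
    (∀ j, HasSum (fun i => π i j) (g j))

/-- The Wasserstein distance of order `p` between probability distributions on `ℕ`. -/
def WassersteinN (p : ℝ) (f g : ℕ → ℝ) : ℝ≥0∞ :=
  (⨅ π : {π : ℕ → ℕ → ℝ // IsCouplingN π f g},
    ∑' (i : ℕ) (j : ℕ), ENNReal.ofReal (π.1 i j) * ENNReal.ofReal (|(i : ℝ) - (j : ℝ)| ^ p)) ^ (1 / p)

/-- The probability generating function of `f`. -/
def pgfN (f : ℕ → ℝ) (z : ℝ) : ℝ := ∑' n : ℕ, z ^ n * f n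

/-- The Toscani (Fourier-based) distance of order `s` between probability
distributions on `ℕ`. -/
def ToscaniN (s : ℝ) (f g : ℕ → ℝ) : ℝ≥0∞ :=
  ⨆ z : Set.Ioo (0 : ℝ) 1, ENNReal.ofReal (|pgfN f z - pgfN g z| / (1 - (z : ℝ)) ^ s)

/-!
Proof idea: `|z ^ i - z ^ j| ≤ (1 - z) * |i - j|` for `z ∈ [0, 1]` (Bernoulli's inequality).
Given a coupling `π` of `f` and `g`, both generating functions are sums over `π`,
`f̂(z) - ĝ(z) = ∑ π i j (z ^ i - z ^ j)`, so `|f̂(z) - ĝ(z)| ≤ (1 - z) ∑ π i j |i - j|` for every `z`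
and every coupling.
-/

section PowDiff

variable {z : ℝ}

lemma pow_sub_pow_add_le_one_sub_mul (hz0 : 0 ≤ z) (hz1 : z ≤ 1) (i k : ℕ) :
    z ^ i - z ^ (i + k) ≤ (1 - z) * k := by
  have bernoulli := one_add_mul_sub_le_pow (a := z) (by linarith) k
  calc z ^ i - z ^ (i + k) = z ^ i * (1 - z ^ k) := by ring
    _ ≤ 1 * (1 - z ^ k) :=
        mul_le_mul_of_nonneg_right (pow_le_one₀ hz0 hz1) (sub_nonneg.2 (pow_le_one₀ hz0 hz1))
    _ ≤ (1 - z) * k := by linarith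

lemma abs_pow_sub_pow_le_one_sub_mul (hz0 : 0 ≤ z) (hz1 : z ≤ 1) (i j : ℕ) :
    |z ^ i - z ^ j| ≤ (1 - z) * |(i : ℝ) - j| := by
  wlog hij : i ≤ j generalizing i j
  · rw [abs_sub_comm, abs_sub_comm (i : ℝ)]
    exact this j i (le_of_not_ge hij)
  obtain ⟨k, rfl⟩ := Nat.exists_eq_add_of_le hij
  rw [abs_of_nonneg (sub_nonneg.2 (pow_le_pow_of_le_one hz0 hz1 hij))]
  simpa using pow_sub_pow_add_le_one_sub_mul hz0 hz1 i k

end PowDiff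

namespace IsCouplingN

variable {π : ℕ → ℕ → ℝ} {f g : ℕ → ℝ} {z : ℝ}

lemma symm (hπ : IsCouplingN π f g) : IsCouplingN (fun j i => π i j) g f :=
  ⟨fun j i => hπ.1 i j, hπ.2.2, hπ.2.1⟩

lemma summable_uncurry (hπ : IsCouplingN π f g) (hf : Summable f) :
    Summable (fun p : ℕ × ℕ => π p.1 p.2) := by
  rw [summable_prod_of_nonneg fun p => hπ.1 p.1 p.2]
  refine ⟨fun i => (hπ.2.1 i).summable, ?_⟩
  simpa only [fun i => (hπ.2.1 i).tsum_eq] using hf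

lemma hasSum_pgfN_left (hπ : IsCouplingN π f g) (hπs : Summable (fun p : ℕ × ℕ => π p.1 p.2))
    (hz0 : 0 ≤ z) (hz1 : z ≤ 1) :
    HasSum (fun p : ℕ × ℕ => z ^ p.1 * π p.1 p.2) (pgfN f z) := by
  have hs : Summable (fun p : ℕ × ℕ => z ^ p.1 * π p.1 p.2) :=
    hπs.of_nonneg_of_le (fun p => mul_nonneg (pow_nonneg hz0 _) (hπ.1 _ _))
      fun p => mul_le_of_le_one_left (hπ.1 _ _) (pow_le_one₀ hz0 hz1)
  have hrows : HasSum (fun i => z ^ i * f i) (∑' p : ℕ × ℕ, z ^ p.1 * π p.1 p.2) :=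
    hs.hasSum.prod_fiberwise fun i => (hπ.2.1 i).mul_left (z ^ i)
  rw [pgfN, hrows.tsum_eq]
  exact hs.hasSum

lemma hasSum_pgfN_right (hπ : IsCouplingN π f g) (hπs : Summable (fun p : ℕ × ℕ => π p.1 p.2))
    (hz0 : 0 ≤ z) (hz1 : z ≤ 1) :
    HasSum (fun p : ℕ × ℕ => z ^ p.2 * π p.1 p.2) (pgfN g z) := by
  have hπs' : Summable (fun p : ℕ × ℕ => π p.2 p.1) :=
    (Equiv.prodComm ℕ ℕ).summable_iff.2 hπs
  exact (Equiv.prodComm ℕ ℕ).hasSum_iff.1 (hπ.symm.hasSum_pgfN_left hπs' hz0 hz1)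

lemma ofReal_abs_pgfN_sub_le (hπ : IsCouplingN π f g) (hf : Summable f)
    (hz0 : 0 ≤ z) (hz1 : z ≤ 1) :
    ENNReal.ofReal |pgfN f z - pgfN g z| ≤
      ENNReal.ofReal (1 - z) *
        ∑' (i : ℕ) (j : ℕ), ENNReal.ofReal (π i j) * ENNReal.ofReal |(i : ℝ) - j| := by
  have hπs := hπ.summable_uncurry hf
  have hdiff : pgfN f z - pgfN g z = ∑' p : ℕ × ℕ, (z ^ p.1 - z ^ p.2) * π p.1 p.2 := by
    simp only [sub_mul]
    exact ((hπ.hasSum_pgfN_left hπs hz0 hz1).sub (hπ.hasSum_pgfN_right hπs hz0 hz1)).tsum_eq.symm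
  rw [← ENNReal.tsum_prod, ← ENNReal.tsum_mul_left, hdiff, ← Real.enorm_eq_ofReal_abs]
  refine tsum_of_enorm_bounded ENNReal.summable.hasSum fun p => ?_
  rw [Real.enorm_eq_ofReal_abs, ← ENNReal.ofReal_mul (hπ.1 _ _),
    ← ENNReal.ofReal_mul (by linarith), abs_mul, abs_of_nonneg (hπ.1 _ _)]
  refine ENNReal.ofReal_le_ofReal ?_
  calc |z ^ p.1 - z ^ p.2| * π p.1 p.2 ≤ (1 - z) * |(p.1 : ℝ) - p.2| * π p.1 p.2 :=
        mul_le_mul_of_nonneg_right (abs_pow_sub_pow_le_one_sub_mul hz0 hz1 _ _) (hπ.1 _ _)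
    _ = (1 - z) * (π p.1 p.2 * |(p.1 : ℝ) - p.2|) := by ring

end IsCouplingN

theorem toscani_one_le_wasserstein_one_general (f g : ℕ → ℝ) (hf : IsProbN f) :
    ToscaniN 1 f g ≤ WassersteinN 1 f g := by
  rw [ToscaniN, WassersteinN, div_one, ENNReal.rpow_one]
  refine iSup_le fun ⟨z, hz0, hz1⟩ => le_iInf fun ⟨π, hπ⟩ => ?_
  have h1z : 0 < 1 - z := by linarith
  simp only [Real.rpow_one]
  rw [ENNReal.ofReal_div_of_pos h1z]
  refine ENNReal.div_le_of_le_mul ?_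
  rw [mul_comm]
  exact hπ.ofReal_abs_pgfN_sub_le hf.2.summable hz0.le hz1.le

/-- For probability distributions `f, g` on `ℕ`,
the first-order Toscani distance is bounded by the first-order Wasserstein
distance: `D₁(f,g) ≤ W₁(f,g)`. -/
theorem toscani_one_le_wasserstein_one (f g : ℕ → ℝ) (hf : IsProbN f) (hg : IsProbN g) :
    ToscaniN 1 f g ≤ WassersteinN 1 f g :=
  toscani_one_le_wasserstein_one_general f g hf

end
end

section
/- Let f and g be probability distributions on ℕ with the same mean value, i.e., ∑_{n≥0} n f_n = ∑_{n≥0} n g_n, and with finite second moments. Then D_2(f,g) ≤ (1/2) W_2(f,g)^2 + min{∑_{n≥0} n^2 f_n, ∑_{n≥0} n^2 g_n}^{1/2} · W_2(f,g). -/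
open scoped ENNReal

noncomputable section

lemma aux_incr (z : ℝ) (hz0 : 0 ≤ z) (hz1 : z ≤ 1) (j d : ℕ) :
    0 ≤ z ^ (j + d) - z ^ j + (1 - z) * d ∧
      z ^ (j + d) - z ^ j + (1 - z) * d ≤
        (1 - z) ^ 2 * ((j : ℝ) * d + (d : ℝ) * ((d : ℝ) - 1) / 2) := by
  induction d with
  | zero => simp
  | succ d ih =>
    obtain ⟨ih1, ih2⟩ := ih
    have hw1 : z ^ (j + d) ≤ 1 := pow_le_one₀ hz0 hz1
    have hw0 : (0:ℝ) ≤ z ^ (j + d) := pow_nonneg hz0 _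
    have hbern : 1 + ((j + d : ℕ) : ℝ) * (z - 1) ≤ z ^ (j + d) := by
      have := one_add_mul_le_pow (a := z - 1) (by linarith) (j + d)
      simpa using this
    have hsucc : z ^ (j + (d+1)) = z ^ (j + d) * z := by
      rw [← pow_succ]; ring_nf
    push_cast at hbern ⊢
    rw [hsucc]
    constructor
    · nlinarith [mul_nonneg (sub_nonneg.2 hz1) (sub_nonneg.2 hw1)]
    · nlinarith [mul_le_mul_of_nonneg_left hbern (sub_nonneg.2 hz1)]

lemma key_ptwise_le (z : ℝ) (hz0 : 0 ≤ z) (hz1 : z ≤ 1) {i j : ℕ} (hji : j ≤ i) :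
    |z ^ i - z ^ j + (1 - z) * ((i:ℝ) - j)| ≤
      (1 - z) ^ 2 * ((min i j : ℕ) * |(i:ℝ) - j| + |(i:ℝ) - j| ^ 2 / 2) := by
  obtain ⟨d, rfl⟩ := Nat.exists_eq_add_of_le hji
  have h := aux_incr z hz0 hz1 j d
  have hd : ((j + d : ℕ) : ℝ) - (j:ℝ) = (d:ℝ) := by push_cast; ring
  have hmin : (min (j + d) j : ℕ) = j := by omega
  rw [hd, hmin, show |(d:ℝ)| = (d:ℝ) from abs_of_nonneg (Nat.cast_nonneg d)]
  rw [abs_of_nonneg h.1]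
  refine h.2.trans ?_
  have : (0:ℝ) ≤ (1 - z)^2 := sq_nonneg _
  nlinarith [Nat.cast_nonneg (α := ℝ) d]

lemma key_ptwise (z : ℝ) (hz0 : 0 ≤ z) (hz1 : z ≤ 1) (i j : ℕ) :
    |z ^ i - z ^ j + (1 - z) * ((i:ℝ) - j)| ≤
      (1 - z) ^ 2 * ((min i j : ℕ) * |(i:ℝ) - j| + |(i:ℝ) - j| ^ 2 / 2) := by
  rcases le_total j i with h | h
  · exact key_ptwise_le z hz0 hz1 h
  · have := key_ptwise_le z hz0 hz1 h
    have e1 : |z ^ i - z ^ j + (1 - z) * ((i:ℝ) - j)|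
        = |z ^ j - z ^ i + (1 - z) * ((j:ℝ) - i)| := by
      rw [← abs_neg]; ring_nf
    have e2 : |(i:ℝ) - j| = |(j:ℝ) - i| := abs_sub_comm _ _
    rw [e1, e2, min_comm]
    exact this

set_option maxHeartbeats 1000000

lemma coupling_bound (f g : ℕ → ℝ) (hf : IsProbN f) (hg : IsProbN g)
    (hf2 : Summable fun n : ℕ => (n : ℝ) ^ 2 * f n)
    (hg2 : Summable fun n : ℕ => (n : ℝ) ^ 2 * g n)
    (hmean : ∑' n : ℕ, (n : ℝ) * f n = ∑' n : ℕ, (n : ℝ) * g n)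
    (z : ℝ) (hz0 : 0 < z) (hz1 : z < 1)
    (π : ℕ → ℕ → ℝ) (hπ : IsCouplingN π f g) :
    ENNReal.ofReal (|pgfN f z - pgfN g z| / (1 - z) ^ (2:ℝ)) ≤
      2⁻¹ * (∑' (i : ℕ) (j : ℕ),
          ENNReal.ofReal (π i j) * ENNReal.ofReal (|(i : ℝ) - (j : ℝ)| ^ (2:ℝ))) +
        ENNReal.ofReal
            (Real.sqrt (min (∑' n : ℕ, (n : ℝ) ^ 2 * f n) (∑' n : ℕ, (n : ℝ) ^ 2 * g n))) *
          (∑' (i : ℕ) (j : ℕ),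
            ENNReal.ofReal (π i j) * ENNReal.ofReal (|(i : ℝ) - (j : ℝ)| ^ (2:ℝ))) ^ ((1:ℝ)/2) := by
  obtain ⟨hπ0, hπf, hπg⟩ := hπ
  obtain ⟨hf0, hfs⟩ := hf
  obtain ⟨hg0, hgs⟩ := hg
  set D : ℕ × ℕ → ℝ := fun p => |(p.1 : ℝ) - (p.2 : ℝ)| with hD
  set m : ℕ × ℕ → ℝ := fun p => ((min p.1 p.2 : ℕ) : ℝ) with hm
  have hD0 : ∀ p, 0 ≤ D p := fun p => abs_nonneg _
  have hm0 : ∀ p, 0 ≤ m p := fun p => Nat.cast_nonneg _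
  -- ENNReal marginals
  have hrow : ∀ i, ∑' j, ENNReal.ofReal (π i j) = ENNReal.ofReal (f i) := by
    intro i
    rw [← ENNReal.ofReal_tsum_of_nonneg (hπ0 i) (hπf i).summable, (hπf i).tsum_eq]
  have hcol : ∀ j, ∑' i, ENNReal.ofReal (π i j) = ENNReal.ofReal (g j) := by
    intro j
    rw [← ENNReal.ofReal_tsum_of_nonneg (fun i => hπ0 i j) (hπg j).summable, (hπg j).tsum_eq]
  -- ENNReal second moments
  have hMfE : ∑' p : ℕ × ℕ, ENNReal.ofReal (π p.1 p.2 * (p.1 : ℝ) ^ 2)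
      = ENNReal.ofReal (∑' n : ℕ, (n : ℝ) ^ 2 * f n) := by
    rw [ENNReal.tsum_prod']
    calc ∑' (i : ℕ) (j : ℕ), ENNReal.ofReal (π i j * (i : ℝ) ^ 2)
        = ∑' i : ℕ, ENNReal.ofReal ((i : ℝ) ^ 2 * f i) := by
          refine tsum_congr fun i => ?_
          calc ∑' j, ENNReal.ofReal (π i j * (i : ℝ) ^ 2)
              = ∑' j, ENNReal.ofReal (π i j) * ENNReal.ofReal ((i:ℝ)^2) := by
                refine tsum_congr fun j => ENNReal.ofReal_mul (hπ0 i j)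
            _ = ENNReal.ofReal (f i) * ENNReal.ofReal ((i:ℝ)^2) := by
                rw [ENNReal.tsum_mul_right, hrow i]
            _ = ENNReal.ofReal ((i : ℝ) ^ 2 * f i) := by
                rw [← ENNReal.ofReal_mul (hf0 i), mul_comm]
      _ = ENNReal.ofReal (∑' n : ℕ, (n : ℝ) ^ 2 * f n) :=
          (ENNReal.ofReal_tsum_of_nonneg
            (fun n => mul_nonneg (sq_nonneg _) (hf0 n)) hf2).symm
  have hMgE : ∑' p : ℕ × ℕ, ENNReal.ofReal (π p.1 p.2 * (p.2 : ℝ) ^ 2)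
      = ENNReal.ofReal (∑' n : ℕ, (n : ℝ) ^ 2 * g n) := by
    rw [ENNReal.tsum_prod', ENNReal.tsum_comm]
    calc ∑' (j : ℕ) (i : ℕ), ENNReal.ofReal (π i j * (j : ℝ) ^ 2)
        = ∑' j : ℕ, ENNReal.ofReal ((j : ℝ) ^ 2 * g j) := by
          refine tsum_congr fun j => ?_
          calc ∑' i, ENNReal.ofReal (π i j * (j : ℝ) ^ 2)
              = ∑' i, ENNReal.ofReal (π i j) * ENNReal.ofReal ((j:ℝ)^2) := by
                refine tsum_congr fun i => ENNReal.ofReal_mul (hπ0 i j)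
            _ = ENNReal.ofReal (g j) * ENNReal.ofReal ((j:ℝ)^2) := by
                rw [ENNReal.tsum_mul_right, hcol j]
            _ = ENNReal.ofReal ((j : ℝ) ^ 2 * g j) := by
                rw [← ENNReal.ofReal_mul (hg0 j), mul_comm]
      _ = ENNReal.ofReal (∑' n : ℕ, (n : ℝ) ^ 2 * g n) :=
          (ENNReal.ofReal_tsum_of_nonneg
            (fun n => mul_nonneg (sq_nonneg _) (hg0 n)) hg2).symm
  have htot : ∑' p : ℕ × ℕ, ENNReal.ofReal (π p.1 p.2) = 1 := by
    rw [ENNReal.tsum_prod']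
    calc ∑' (i : ℕ) (j : ℕ), ENNReal.ofReal (π i j)
        = ∑' i : ℕ, ENNReal.ofReal (f i) := tsum_congr hrow
      _ = ENNReal.ofReal (∑' n, f n) :=
          (ENNReal.ofReal_tsum_of_nonneg hf0 hfs.summable).symm
      _ = 1 := by rw [hfs.tsum_eq, ENNReal.ofReal_one]
  -- transfer to real summability
  have key : ∀ u : ℕ × ℕ → ℝ, (∀ p, 0 ≤ u p) →
      (∑' p : ℕ × ℕ, ENNReal.ofReal (u p)) ≠ ⊤ → Summable u := by
    intro u hu hfin
    exact (ENNReal.summable_toReal hfin).congr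
      (fun p => by rw [ENNReal.toReal_ofReal (hu p)])
  have s2f : Summable fun p : ℕ × ℕ => π p.1 p.2 * (p.1 : ℝ) ^ 2 :=
    key _ (fun p => mul_nonneg (hπ0 _ _) (sq_nonneg _)) (by rw [hMfE]; exact ENNReal.ofReal_ne_top)
  have s2g : Summable fun p : ℕ × ℕ => π p.1 p.2 * (p.2 : ℝ) ^ 2 :=
    key _ (fun p => mul_nonneg (hπ0 _ _) (sq_nonneg _)) (by rw [hMgE]; exact ENNReal.ofReal_ne_top)
  have s1 : Summable fun p : ℕ × ℕ => π p.1 p.2 :=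
    key _ (fun p => hπ0 _ _) (by rw [htot]; exact ENNReal.one_ne_top)
  have sdom : Summable fun p : ℕ × ℕ =>
      2 * (π p.1 p.2 * (p.1 : ℝ) ^ 2) + 2 * (π p.1 p.2 * (p.2 : ℝ) ^ 2) :=
    (s2f.mul_left 2).add (s2g.mul_left 2)
  have hDle : ∀ p : ℕ × ℕ, D p ≤ (p.1 : ℝ) + (p.2 : ℝ) := by
    intro p
    have : |(p.1:ℝ) - (p.2:ℝ)| ≤ |(p.1:ℝ)| + |(p.2:ℝ)| := abs_sub _ _
    simpa [abs_of_nonneg (Nat.cast_nonneg _ : (0:ℝ) ≤ p.1),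
      abs_of_nonneg (Nat.cast_nonneg _ : (0:ℝ) ≤ p.2)] using this
  have hmle1 : ∀ p : ℕ × ℕ, m p ≤ (p.1 : ℝ) := by
    intro p; exact_mod_cast Nat.cast_le.2 (min_le_left _ _)
  have hmle2 : ∀ p : ℕ × ℕ, m p ≤ (p.2 : ℝ) := by
    intro p; exact_mod_cast Nat.cast_le.2 (min_le_right _ _)
  have sD2 : Summable fun p : ℕ × ℕ => π p.1 p.2 * D p ^ 2 := by
    refine Summable.of_nonneg_of_le
      (fun p => mul_nonneg (hπ0 _ _) (sq_nonneg _)) (fun p => ?_) sdom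
    have h1 : D p ^ 2 ≤ 2 * (p.1:ℝ)^2 + 2 * (p.2:ℝ)^2 := by
      rw [hD, sq_abs]; nlinarith [sq_nonneg ((p.1:ℝ) + (p.2:ℝ))]
    nlinarith [hπ0 p.1 p.2, mul_le_mul_of_nonneg_left h1 (hπ0 p.1 p.2)]
  have sMD : Summable fun p : ℕ × ℕ => π p.1 p.2 * (m p * D p) := by
    refine Summable.of_nonneg_of_le
      (fun p => mul_nonneg (hπ0 _ _) (mul_nonneg (hm0 _) (hD0 _))) (fun p => ?_) sdom
    have h1 : m p * D p ≤ 2 * (p.1:ℝ)^2 + 2 * (p.2:ℝ)^2 := by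
      nlinarith [hDle p, hmle1 p, hm0 p, hD0 p, Nat.cast_nonneg (α := ℝ) p.1,
        Nat.cast_nonneg (α := ℝ) p.2, sq_nonneg ((p.1:ℝ) - (p.2:ℝ))]
    nlinarith [hπ0 p.1 p.2, mul_le_mul_of_nonneg_left h1 (hπ0 p.1 p.2)]
  have sm2 : Summable fun p : ℕ × ℕ => π p.1 p.2 * m p ^ 2 := by
    refine Summable.of_nonneg_of_le
      (fun p => mul_nonneg (hπ0 _ _) (sq_nonneg _)) (fun p => ?_) s2f
    exact mul_le_mul_of_nonneg_left (by nlinarith [hmle1 p, hm0 p]) (hπ0 _ _)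
  have si : Summable fun p : ℕ × ℕ => π p.1 p.2 * (p.1 : ℝ) := by
    refine Summable.of_nonneg_of_le
      (fun p => mul_nonneg (hπ0 _ _) (Nat.cast_nonneg _)) (fun p => ?_) (s2f.add s1)
    have : (p.1 : ℝ) ≤ (p.1:ℝ)^2 + 1 := by nlinarith [sq_nonneg ((p.1:ℝ) - 1)]
    nlinarith [hπ0 p.1 p.2, mul_le_mul_of_nonneg_left this (hπ0 p.1 p.2)]
  have sj : Summable fun p : ℕ × ℕ => π p.1 p.2 * (p.2 : ℝ) := by
    refine Summable.of_nonneg_of_le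
      (fun p => mul_nonneg (hπ0 _ _) (Nat.cast_nonneg _)) (fun p => ?_) (s2g.add s1)
    have : (p.2 : ℝ) ≤ (p.2:ℝ)^2 + 1 := by nlinarith [sq_nonneg ((p.2:ℝ) - 1)]
    nlinarith [hπ0 p.1 p.2, mul_le_mul_of_nonneg_left this (hπ0 p.1 p.2)]
  have szf : Summable fun p : ℕ × ℕ => π p.1 p.2 * z ^ p.1 := by
    refine Summable.of_nonneg_of_le
      (fun p => mul_nonneg (hπ0 _ _) (pow_nonneg hz0.le _)) (fun p => ?_) s1
    nlinarith [pow_le_one₀ hz0.le hz1.le (n := p.1), hπ0 p.1 p.2,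
      pow_nonneg hz0.le p.1]
  have szg : Summable fun p : ℕ × ℕ => π p.1 p.2 * z ^ p.2 := by
    refine Summable.of_nonneg_of_le
      (fun p => mul_nonneg (hπ0 _ _) (pow_nonneg hz0.le _)) (fun p => ?_) s1
    nlinarith [pow_le_one₀ hz0.le hz1.le (n := p.2), hπ0 p.1 p.2,
      pow_nonneg hz0.le p.2]
  -- swap machinery
  have swap_summable : ∀ u : ℕ × ℕ → ℝ, Summable u →
      Summable fun q : ℕ × ℕ => u (q.2, q.1) := by
    intro u hu
    exact ((Equiv.prodComm ℕ ℕ).summable_iff).2 hu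
  have swap_tsum : ∀ u : ℕ × ℕ → ℝ,
      ∑' p : ℕ × ℕ, u p = ∑' q : ℕ × ℕ, u (q.2, q.1) := by
    intro u
    exact ((Equiv.prodComm ℕ ℕ).tsum_eq u).symm
  -- real Fubini identities
  have T1 : ∑' p : ℕ × ℕ, π p.1 p.2 * z ^ p.1 = pgfN f z := by
    rw [Summable.tsum_prod' szf szf.prod_factor]
    refine tsum_congr fun i => ?_
    dsimp only
    rw [tsum_mul_right, (hπf i).tsum_eq, mul_comm]
  have T2 : ∑' p : ℕ × ℕ, π p.1 p.2 * z ^ p.2 = pgfN g z := by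
    rw [swap_tsum]
    have hs := swap_summable _ szg
    rw [Summable.tsum_prod' hs hs.prod_factor]
    refine tsum_congr fun j => ?_
    dsimp only
    rw [tsum_mul_right, (hπg j).tsum_eq, mul_comm]
  have T3 : ∑' p : ℕ × ℕ, π p.1 p.2 * (p.1 : ℝ) = ∑' n : ℕ, (n : ℝ) * f n := by
    rw [Summable.tsum_prod' si si.prod_factor]
    refine tsum_congr fun i => ?_
    dsimp only
    rw [tsum_mul_right, (hπf i).tsum_eq, mul_comm]
  have T4 : ∑' p : ℕ × ℕ, π p.1 p.2 * (p.2 : ℝ) = ∑' n : ℕ, (n : ℝ) * g n := by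
    rw [swap_tsum]
    have hs := swap_summable _ sj
    rw [Summable.tsum_prod' hs hs.prod_factor]
    refine tsum_congr fun j => ?_
    dsimp only
    rw [tsum_mul_right, (hπg j).tsum_eq, mul_comm]
  have T5 : ∑' p : ℕ × ℕ, π p.1 p.2 * (p.1 : ℝ) ^ 2 = ∑' n : ℕ, (n : ℝ) ^ 2 * f n := by
    rw [Summable.tsum_prod' s2f s2f.prod_factor]
    refine tsum_congr fun i => ?_
    dsimp only
    rw [tsum_mul_right, (hπf i).tsum_eq, mul_comm]
  have T6 : ∑' p : ℕ × ℕ, π p.1 p.2 * (p.2 : ℝ) ^ 2 = ∑' n : ℕ, (n : ℝ) ^ 2 * g n := by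
    rw [swap_tsum]
    have hs := swap_summable _ s2g
    rw [Summable.tsum_prod' hs hs.prod_factor]
    refine tsum_congr fun j => ?_
    dsimp only
    rw [tsum_mul_right, (hπg j).tsum_eq, mul_comm]
  -- decomposition of the pgf difference
  set F : ℕ × ℕ → ℝ :=
    fun p => π p.1 p.2 * (z ^ p.1 - z ^ p.2 + (1 - z) * ((p.1 : ℝ) - (p.2 : ℝ))) with hF
  have hFeq : F = fun p : ℕ × ℕ =>
      (π p.1 p.2 * z ^ p.1 - π p.1 p.2 * z ^ p.2)
        + (1 - z) * (π p.1 p.2 * (p.1 : ℝ) - π p.1 p.2 * (p.2 : ℝ)) := by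
    funext p; rw [hF]; ring
  have sF : Summable F := by
    rw [hFeq]; exact (szf.sub szg).add ((si.sub sj).mul_left _)
  have tF : ∑' p : ℕ × ℕ, F p = pgfN f z - pgfN g z := by
    rw [hFeq, Summable.tsum_add (szf.sub szg) ((si.sub sj).mul_left _), Summable.tsum_sub szf szg,
      tsum_mul_left, Summable.tsum_sub si sj, T1, T2, T3, T4, hmean]
    ring
  -- bound function
  set G : ℕ × ℕ → ℝ :=
    fun p => (1 - z) ^ 2 * (π p.1 p.2 * (m p * D p) + π p.1 p.2 * D p ^ 2 / 2) with hG
  have sG : Summable G := ((sMD.add (sD2.div_const 2)).mul_left _)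
  have hFG : ∀ p : ℕ × ℕ, |F p| ≤ G p := by
    intro p
    rw [hF, hG, abs_mul, abs_of_nonneg (hπ0 p.1 p.2)]
    have hk := key_ptwise z hz0.le hz1.le p.1 p.2
    have hπn := hπ0 p.1 p.2
    have := mul_le_mul_of_nonneg_left hk hπn
    calc π p.1 p.2 * |z ^ p.1 - z ^ p.2 + (1 - z) * ((p.1:ℝ) - (p.2:ℝ))|
        ≤ π p.1 p.2 * ((1 - z) ^ 2 * ((min p.1 p.2 : ℕ) * |(p.1:ℝ) - (p.2:ℝ)|
            + |(p.1:ℝ) - (p.2:ℝ)| ^ 2 / 2)) := this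
      _ = (1 - z) ^ 2 * (π p.1 p.2 * (m p * D p) + π p.1 p.2 * D p ^ 2 / 2) := by
          rw [hm, hD]; ring
  have habsF : |pgfN f z - pgfN g z| ≤
      (1 - z) ^ 2 * ((∑' p : ℕ × ℕ, π p.1 p.2 * (m p * D p))
        + (∑' p : ℕ × ℕ, π p.1 p.2 * D p ^ 2) / 2) := by
    rw [← tF]
    have h1 : |∑' p : ℕ × ℕ, F p| ≤ ∑' p : ℕ × ℕ, |F p| := by
      simpa [Real.norm_eq_abs] using
        norm_tsum_le_tsum_norm (f := F) (by
          refine Summable.of_nonneg_of_le (fun p => norm_nonneg _) (fun p => ?_) sG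
          simpa [Real.norm_eq_abs] using hFG p)
    have h2 : ∑' p : ℕ × ℕ, |F p| ≤ ∑' p : ℕ × ℕ, G p := by
      refine Summable.tsum_le_tsum hFG ?_ sG
      refine Summable.of_nonneg_of_le (fun p => abs_nonneg _) hFG sG
    have h3 : ∑' p : ℕ × ℕ, G p = (1 - z) ^ 2 * ((∑' p : ℕ × ℕ, π p.1 p.2 * (m p * D p))
        + (∑' p : ℕ × ℕ, π p.1 p.2 * D p ^ 2) / 2) := by
      rw [hG, tsum_mul_left, Summable.tsum_add sMD (sD2.div_const 2), tsum_div_const]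
    calc |∑' p : ℕ × ℕ, F p| ≤ ∑' p : ℕ × ℕ, |F p| := h1
      _ ≤ ∑' p : ℕ × ℕ, G p := h2
      _ = _ := h3
  -- Cauchy-Schwarz
  set SC := ∑' p : ℕ × ℕ, π p.1 p.2 * D p ^ 2 with hSCdef
  set SMD := ∑' p : ℕ × ℕ, π p.1 p.2 * (m p * D p) with hSMDdef
  set SM2 := ∑' p : ℕ × ℕ, π p.1 p.2 * m p ^ 2 with hSM2def
  have hSC0 : 0 ≤ SC := tsum_nonneg fun p => mul_nonneg (hπ0 _ _) (sq_nonneg _)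
  have hSM20 : 0 ≤ SM2 := tsum_nonneg fun p => mul_nonneg (hπ0 _ _) (sq_nonneg _)
  have hCS : SMD ≤ Real.sqrt SM2 * Real.sqrt SC := by
    refine Summable.tsum_le_of_sum_le sMD fun s => ?_
    have hcs := Finset.sum_mul_sq_le_sq_mul_sq s
      (fun p => Real.sqrt (π p.1 p.2) * m p) (fun p => Real.sqrt (π p.1 p.2) * D p)
    have e1 : ∀ p : ℕ × ℕ, (Real.sqrt (π p.1 p.2) * m p) * (Real.sqrt (π p.1 p.2) * D p)
        = π p.1 p.2 * (m p * D p) := by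
      intro p
      calc (Real.sqrt (π p.1 p.2) * m p) * (Real.sqrt (π p.1 p.2) * D p)
          = Real.sqrt (π p.1 p.2) * Real.sqrt (π p.1 p.2) * (m p * D p) := by ring
        _ = π p.1 p.2 * (m p * D p) := by rw [Real.mul_self_sqrt (hπ0 p.1 p.2)]
    have e2 : ∀ p : ℕ × ℕ, (Real.sqrt (π p.1 p.2) * m p) ^ 2 = π p.1 p.2 * m p ^ 2 := by
      intro p; rw [mul_pow, Real.sq_sqrt (hπ0 p.1 p.2)]
    have e3 : ∀ p : ℕ × ℕ, (Real.sqrt (π p.1 p.2) * D p) ^ 2 = π p.1 p.2 * D p ^ 2 := by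
      intro p; rw [mul_pow, Real.sq_sqrt (hπ0 p.1 p.2)]
    rw [Finset.sum_congr rfl (fun p _ => e1 p), Finset.sum_congr rfl (fun p _ => e2 p),
      Finset.sum_congr rfl (fun p _ => e3 p)] at hcs
    have hb1 : ∑ p ∈ s, π p.1 p.2 * m p ^ 2 ≤ SM2 :=
      Summable.sum_le_tsum s (fun p _ => mul_nonneg (hπ0 _ _) (sq_nonneg _)) sm2
    have hb2 : ∑ p ∈ s, π p.1 p.2 * D p ^ 2 ≤ SC :=
      Summable.sum_le_tsum s (fun p _ => mul_nonneg (hπ0 _ _) (sq_nonneg _)) sD2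
    have hsum0 : 0 ≤ ∑ p ∈ s, π p.1 p.2 * (m p * D p) :=
      Finset.sum_nonneg fun p _ => mul_nonneg (hπ0 _ _) (mul_nonneg (hm0 _) (hD0 _))
    have hfin0 : (0:ℝ) ≤ ∑ p ∈ s, π p.1 p.2 * m p ^ 2 :=
      Finset.sum_nonneg fun p _ => mul_nonneg (hπ0 _ _) (sq_nonneg _)
    have hfin0' : (0:ℝ) ≤ ∑ p ∈ s, π p.1 p.2 * D p ^ 2 :=
      Finset.sum_nonneg fun p _ => mul_nonneg (hπ0 _ _) (sq_nonneg _)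
    have hsq : (∑ p ∈ s, π p.1 p.2 * (m p * D p)) ^ 2 ≤ SM2 * SC :=
      hcs.trans (mul_le_mul hb1 hb2 hfin0' hSM20)
    have := Real.le_sqrt_of_sq_le hsq
    rwa [Real.sqrt_mul hSM20] at this
  have hSM2min : SM2 ≤ min (∑' n : ℕ, (n : ℝ) ^ 2 * f n) (∑' n : ℕ, (n : ℝ) ^ 2 * g n) := by
    refine le_min ?_ ?_
    · rw [← T5]
      refine Summable.tsum_le_tsum (fun p => ?_) sm2 s2f
      exact mul_le_mul_of_nonneg_left (by nlinarith [hmle1 p, hm0 p]) (hπ0 _ _)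
    · rw [← T6]
      refine Summable.tsum_le_tsum (fun p => ?_) sm2 s2g
      exact mul_le_mul_of_nonneg_left (by nlinarith [hmle2 p, hm0 p]) (hπ0 _ _)
  have hq : |pgfN f z - pgfN g z| / (1 - z) ^ (2:ℝ) ≤
      SC / 2 + Real.sqrt (min (∑' n : ℕ, (n : ℝ) ^ 2 * f n) (∑' n : ℕ, (n : ℝ) ^ 2 * g n))
        * Real.sqrt SC := by
    have h2z : (1 - z) ^ (2:ℝ) = (1 - z) ^ (2:ℕ) := by
      rw [show ((2:ℝ)) = ((2:ℕ):ℝ) by norm_num, Real.rpow_natCast]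
    rw [h2z]
    have h1z : (0:ℝ) < 1 - z := by linarith
    have hpos : (0:ℝ) < (1 - z) ^ (2:ℕ) := pow_pos h1z 2
    rw [div_le_iff₀ hpos]
    have step1 : SMD ≤ Real.sqrt (min (∑' n : ℕ, (n : ℝ) ^ 2 * f n)
        (∑' n : ℕ, (n : ℝ) ^ 2 * g n)) * Real.sqrt SC :=
      hCS.trans (mul_le_mul_of_nonneg_right (Real.sqrt_le_sqrt hSM2min) (Real.sqrt_nonneg _))
    calc |pgfN f z - pgfN g z| ≤ (1 - z) ^ 2 * (SMD + SC / 2) := habsF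
      _ ≤ (1 - z) ^ 2 * (Real.sqrt (min (∑' n : ℕ, (n : ℝ) ^ 2 * f n)
            (∑' n : ℕ, (n : ℝ) ^ 2 * g n)) * Real.sqrt SC + SC / 2) := by
          refine mul_le_mul_of_nonneg_left (by linarith) (sq_nonneg _)
      _ = (SC / 2 + Real.sqrt (min (∑' n : ℕ, (n : ℝ) ^ 2 * f n)
            (∑' n : ℕ, (n : ℝ) ^ 2 * g n)) * Real.sqrt SC) * (1 - z) ^ (2:ℕ) := by ring
  -- ENNReal conversion
  have hCE : (∑' (i : ℕ) (j : ℕ),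
      ENNReal.ofReal (π i j) * ENNReal.ofReal (|(i : ℝ) - (j : ℝ)| ^ (2:ℝ)))
      = ENNReal.ofReal SC := by
    have h2 : ∀ x : ℝ, |x| ^ (2:ℝ) = |x| ^ (2:ℕ) := fun x => by
      rw [show ((2:ℝ)) = ((2:ℕ):ℝ) by norm_num, Real.rpow_natCast]
    calc ∑' (i : ℕ) (j : ℕ), ENNReal.ofReal (π i j) * ENNReal.ofReal (|(i:ℝ) - (j:ℝ)| ^ (2:ℝ))
        = ∑' p : ℕ × ℕ, ENNReal.ofReal (π p.1 p.2 * D p ^ 2) := by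
          rw [ENNReal.tsum_prod']
          refine tsum_congr fun i => tsum_congr fun j => ?_
          rw [h2, ← ENNReal.ofReal_mul (hπ0 i j)]
      _ = ENNReal.ofReal SC :=
          (ENNReal.ofReal_tsum_of_nonneg
            (fun p => mul_nonneg (hπ0 _ _) (sq_nonneg _)) sD2).symm
  rw [hCE]
  calc ENNReal.ofReal (|pgfN f z - pgfN g z| / (1 - z) ^ (2:ℝ))
      ≤ ENNReal.ofReal (SC / 2 + Real.sqrt (min (∑' n : ℕ, (n : ℝ) ^ 2 * f n)
          (∑' n : ℕ, (n : ℝ) ^ 2 * g n)) * Real.sqrt SC) := ENNReal.ofReal_le_ofReal hq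
    _ = ENNReal.ofReal (SC / 2) + ENNReal.ofReal (Real.sqrt (min (∑' n : ℕ, (n : ℝ) ^ 2 * f n)
          (∑' n : ℕ, (n : ℝ) ^ 2 * g n)) * Real.sqrt SC) := by
        rw [ENNReal.ofReal_add (div_nonneg hSC0 (by norm_num)) (mul_nonneg (Real.sqrt_nonneg _) (Real.sqrt_nonneg _))]
    _ = 2⁻¹ * ENNReal.ofReal SC + ENNReal.ofReal (Real.sqrt (min (∑' n : ℕ, (n : ℝ) ^ 2 * f n)
          (∑' n : ℕ, (n : ℝ) ^ 2 * g n))) * ENNReal.ofReal SC ^ ((1:ℝ)/2) := by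
        congr 1
        · rw [ENNReal.ofReal_div_of_pos (by norm_num), ENNReal.ofReal_ofNat,
            ENNReal.div_eq_inv_mul]
        · rw [ENNReal.ofReal_mul (Real.sqrt_nonneg _)]
          congr 1
          rw [Real.sqrt_eq_rpow, ENNReal.ofReal_rpow_of_nonneg hSC0 (by norm_num)]

/-- For probability distributions `f, g` on `ℕ` with the same mean
value and finite second moments,
`D₂(f,g) ≤ (1/2) W₂(f,g)² + min{∑ n² fₙ, ∑ n² gₙ}^{1/2} · W₂(f,g)`. -/
theorem toscani_two_le_wasserstein_two (f g : ℕ → ℝ) (hf : IsProbN f) (hg : IsProbN g)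
    (hf2 : Summable fun n : ℕ => (n : ℝ) ^ 2 * f n)
    (hg2 : Summable fun n : ℕ => (n : ℝ) ^ 2 * g n)
    (hmean : ∑' n : ℕ, (n : ℝ) * f n = ∑' n : ℕ, (n : ℝ) * g n) :
    ToscaniN 2 f g ≤
      2⁻¹ * WassersteinN 2 f g ^ 2 +
        ENNReal.ofReal
            (Real.sqrt (min (∑' n : ℕ, (n : ℝ) ^ 2 * f n) (∑' n : ℕ, (n : ℝ) ^ 2 * g n))) *
          WassersteinN 2 f g := by
  set A := ENNReal.ofReal
      (Real.sqrt (min (∑' n : ℕ, (n : ℝ) ^ 2 * f n) (∑' n : ℕ, (n : ℝ) ^ 2 * g n))) with hA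
  rw [ToscaniN, WassersteinN]
  set I := ⨅ π : {π : ℕ → ℕ → ℝ // IsCouplingN π f g},
      ∑' (i : ℕ) (j : ℕ),
        ENNReal.ofReal (π.1 i j) * ENNReal.ofReal (|(i : ℝ) - (j : ℝ)| ^ (2:ℝ)) with hI
  have hW2 : (I ^ (1/(2:ℝ))) ^ (2:ℕ) = I := by
    rw [← ENNReal.rpow_natCast (I ^ (1/(2:ℝ))) 2, ← ENNReal.rpow_mul]
    norm_num
  rw [hW2]
  refine iSup_le fun zz => ?_
  obtain ⟨z, hz0, hz1⟩ := zz
  have hAne : A ≠ ⊤ := ENNReal.ofReal_ne_top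
  have hbound : ∀ π : {π : ℕ → ℕ → ℝ // IsCouplingN π f g},
      ENNReal.ofReal (|pgfN f z - pgfN g z| / (1 - z) ^ (2:ℝ)) ≤
        2⁻¹ * (∑' (i : ℕ) (j : ℕ),
            ENNReal.ofReal (π.1 i j) * ENNReal.ofReal (|(i : ℝ) - (j : ℝ)| ^ (2:ℝ))) +
          A * (∑' (i : ℕ) (j : ℕ),
            ENNReal.ofReal (π.1 i j) * ENNReal.ofReal (|(i : ℝ) - (j : ℝ)| ^ (2:ℝ))) ^ ((1:ℝ)/2) :=
    fun π => coupling_bound f g hf hg hf2 hg2 hmean z hz0 hz1 π.1 π.2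
  refine ENNReal.le_of_forall_pos_le_add fun ε hε hT => ?_
  have hIne : I ≠ ⊤ := by
    intro h
    rw [h] at hT
    simp [ENNReal.mul_top] at hT
  set δ : ℝ≥0∞ := min (↑ε) ((↑ε / (2 * (A + 1))) ^ (2:ℕ)) with hδ
  have hεne : (↑ε : ℝ≥0∞) ≠ 0 := by exact_mod_cast hε.ne'
  have hden_ne : (2 * (A + 1)) ≠ ⊤ := by
    refine ENNReal.mul_ne_top (by norm_num) ?_
    exact ENNReal.add_ne_top.2 ⟨hAne, ENNReal.one_ne_top⟩
  have hq0 : (0:ℝ≥0∞) < ↑ε / (2 * (A + 1)) :=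
    ENNReal.div_pos hεne hden_ne
  have hδ0 : 0 < δ := by
    refine lt_min (by exact_mod_cast hε) ?_
    exact ENNReal.pow_pos hq0 2
  have hlt : I < I + δ := ENNReal.lt_add_right hIne hδ0.ne'
  obtain ⟨π, hπlt⟩ := iInf_lt_iff.mp (hI ▸ hlt)
  have hmono : (∑' (i : ℕ) (j : ℕ),
      ENNReal.ofReal (π.1 i j) * ENNReal.ofReal (|(i : ℝ) - (j : ℝ)| ^ (2:ℝ))) ≤ I + δ :=
    hπlt.le
  have hrpow_mono : (∑' (i : ℕ) (j : ℕ),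
      ENNReal.ofReal (π.1 i j) * ENNReal.ofReal (|(i : ℝ) - (j : ℝ)| ^ (2:ℝ))) ^ ((1:ℝ)/2)
      ≤ (I + δ) ^ ((1:ℝ)/2) := ENNReal.rpow_le_rpow hmono (by norm_num)
  have hsplit : (I + δ) ^ ((1:ℝ)/2) ≤ I ^ ((1:ℝ)/2) + δ ^ ((1:ℝ)/2) :=
    ENNReal.rpow_add_le_add_rpow I δ (by norm_num) (by norm_num)
  have hδε : 2⁻¹ * δ + A * δ ^ ((1:ℝ)/2) ≤ ↑ε := by
    have h1 : 2⁻¹ * δ ≤ 2⁻¹ * ↑ε := mul_le_mul_right (min_le_left _ _) _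
    have h2 : δ ^ ((1:ℝ)/2) ≤ ↑ε / (2 * (A + 1)) := by
      have : δ ≤ (↑ε / (2 * (A + 1))) ^ (2:ℕ) := min_le_right _ _
      have h3 := ENNReal.rpow_le_rpow this (by norm_num : (0:ℝ) ≤ 1/2)
      rwa [← ENNReal.rpow_natCast (↑ε / (2 * (A + 1))) 2, ← ENNReal.rpow_mul,
        show ((2:ℕ):ℝ) * (1/2) = 1 by norm_num, ENNReal.rpow_one] at h3
    have h4 : A * δ ^ ((1:ℝ)/2) ≤ A * (↑ε / (2 * (A + 1))) := mul_le_mul_right h2 _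
    have h5 : A * (↑ε / (2 * (A + 1))) ≤ 2⁻¹ * ↑ε := by
      have hA1ne : (A + 1) ≠ ⊤ := ENNReal.add_ne_top.2 ⟨hAne, ENNReal.one_ne_top⟩
      have hA1ne0 : (A + 1) ≠ 0 := by
        simp
      rw [ENNReal.div_eq_inv_mul, ENNReal.mul_inv (Or.inl (by norm_num)) (Or.inl (by norm_num))]
      calc A * (2⁻¹ * (A + 1)⁻¹ * ↑ε) = 2⁻¹ * ↑ε * (A * (A + 1)⁻¹) := by ring
        _ ≤ 2⁻¹ * ↑ε * ((A + 1) * (A + 1)⁻¹) := by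
            exact mul_le_mul_right (mul_le_mul_left (le_add_right le_rfl) _) _
        _ = 2⁻¹ * ↑ε := by rw [ENNReal.mul_inv_cancel hA1ne0 hA1ne, mul_one]
    calc 2⁻¹ * δ + A * δ ^ ((1:ℝ)/2) ≤ 2⁻¹ * ↑ε + 2⁻¹ * ↑ε := add_le_add h1 (h4.trans h5)
      _ = ↑ε := by
          rw [← two_mul, ← mul_assoc, ENNReal.mul_inv_cancel (by norm_num) (by norm_num), one_mul]
  calc ENNReal.ofReal (|pgfN f z - pgfN g z| / (1 - z) ^ (2:ℝ))
      ≤ 2⁻¹ * (∑' (i : ℕ) (j : ℕ),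
          ENNReal.ofReal (π.1 i j) * ENNReal.ofReal (|(i : ℝ) - (j : ℝ)| ^ (2:ℝ))) +
        A * (∑' (i : ℕ) (j : ℕ),
          ENNReal.ofReal (π.1 i j) * ENNReal.ofReal (|(i : ℝ) - (j : ℝ)| ^ (2:ℝ))) ^ ((1:ℝ)/2) :=
        hbound π
    _ ≤ 2⁻¹ * (I + δ) + A * (I ^ ((1:ℝ)/2) + δ ^ ((1:ℝ)/2)) := by
        exact add_le_add (mul_le_mul_right hmono _)
          (mul_le_mul_right (hrpow_mono.trans hsplit) _)
    _ = (2⁻¹ * I + A * I ^ ((1:ℝ)/2)) + (2⁻¹ * δ + A * δ ^ ((1:ℝ)/2)) := by ring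
    _ ≤ (2⁻¹ * I + A * I ^ ((1:ℝ)/2)) + ↑ε := add_le_add le_rfl hδε

end
end

section
/- Let N ∈ ℕ with N ≥ 1 and α > 0. There exists a constant C > 0, depending only on N, α, and m_{2+α} := max{∑_{n≥0} n^{2+α} f_n, ∑_{n≥0} n^{2+α} g_n}, such that for all probability distributions f and g on ℕ with the same mean value and with supp(f) ∪ supp(g) ⊆ {0, 1, ..., N}, one has W_2(f,g)^2 ≤ C · D_2(f,g)^{α/(1+α)}. -/
open scoped ENNReal

noncomputable section

/-!
For distributions supported in `{0, …, N}` everything is finite-dimensional. The coupling that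
leaves the common mass `min f g` in place and moves the rest independently transports mass at
most `‖f - g‖₁` over distances at most `N`, so `W₂² ≤ N² ‖f - g‖₁ ≤ 2 N²`. The values of the
generating functions at `N + 1` distinct points of `(0, 1)` determine `f - g` through an invertible
Vandermonde matrix, and `(1 - z)² ≤ 1`, so `‖f - g‖₁ ≤ c D₂(f, g)`. Since `θ = α / (1 + α)` lies
in `(0, 1]`, `min (a t) b ≤ (a + b) t ^ θ` then gives the bound.
-/

open Finset
open scoped Matrix

def transportCost (p : ℝ) (π : ℕ → ℕ → ℝ) : ℝ≥0∞ :=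
  ∑' (i : ℕ) (j : ℕ), ENNReal.ofReal (π i j) * ENNReal.ofReal (|(i : ℝ) - (j : ℝ)| ^ p)

def diagonalPlan (h : ℕ → ℝ) : ℕ → ℕ → ℝ := fun i j => if i = j then h i else 0

section Coupling

variable {p ε : ℝ} {f g u v h : ℕ → ℝ} {π ρ : ℕ → ℕ → ℝ}

lemma wassersteinN_rpow_le_transportCost (hp : p ≠ 0) (hπ : IsCouplingN π f g) :
    WassersteinN p f g ^ p ≤ transportCost p π := by
  rw [WassersteinN, one_div, ENNReal.rpow_inv_rpow hp]
  exact iInf_le (fun π : {π // IsCouplingN π f g} => transportCost p π.1) ⟨π, hπ⟩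

lemma IsCouplingN.add (hπ : IsCouplingN π f g) (hρ : IsCouplingN ρ u v) :
    IsCouplingN (π + ρ) (f + u) (g + v) :=
  ⟨fun i j => add_nonneg (hπ.1 i j) (hρ.1 i j), fun i => (hπ.2.1 i).add (hρ.2.1 i),
    fun j => (hπ.2.2 j).add (hρ.2.2 j)⟩

lemma isCouplingN_diagonalPlan (h0 : ∀ n, 0 ≤ h n) : IsCouplingN (diagonalPlan h) h h := by
  refine ⟨fun i j => ?_, fun i => ?_, fun j => ?_⟩
  · unfold diagonalPlan; split_ifs <;> simp [h0]
  · simpa [diagonalPlan] using hasSum_single (f := fun j => diagonalPlan h i j) i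
      fun j hj => if_neg hj.symm
  · simpa [diagonalPlan] using hasSum_single (f := fun i => diagonalPlan h i j) j
      fun i hi => if_neg hi

lemma isCouplingN_mul_div (hu0 : ∀ n, 0 ≤ u n) (hv0 : ∀ n, 0 ≤ v n) (hu : HasSum u ε)
    (hv : HasSum v ε) : IsCouplingN (fun i j => u i * v j / ε) u v := by
  have hε : 0 ≤ ε := hasSum_le hu0 hasSum_zero hu
  -- for `ε = 0` both distributions vanish, so the junk value `x / 0 = 0` is harmless
  have cancel : ∀ w : ℕ → ℝ, (∀ n, 0 ≤ w n) → HasSum w ε → ∀ n, w n * ε / ε = w n := by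
    intro w hw0 hw n
    rcases hε.eq_or_lt with hε0 | hε0
    · have : w n = 0 := le_antisymm (hε0 ▸ le_hasSum hw n fun m _ => hw0 m) (hw0 n)
      simp [this]
    · field_simp
  refine ⟨fun i j => div_nonneg (mul_nonneg (hu0 i) (hv0 j)) hε, fun i => ?_, fun j => ?_⟩
  · simpa [cancel u hu0 hu i] using (hv.mul_left (u i)).div_const ε
  · simpa [mul_comm ε, cancel v hv0 hv j] using (hu.mul_right (v j)).div_const ε

end Coupling

section Cost

variable {p : ℝ} {N : ℕ} {u v : ℕ → ℝ} {ρ : ℕ → ℕ → ℝ}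

lemma IsCouplingN.le_left (hρ : IsCouplingN ρ u v) (i j : ℕ) : ρ i j ≤ u i :=
  le_hasSum (hρ.2.1 i) j fun k _ => hρ.1 i k

lemma IsCouplingN.le_right (hρ : IsCouplingN ρ u v) (i j : ℕ) : ρ i j ≤ v j :=
  le_hasSum (hρ.2.2 j) i fun k _ => hρ.1 k j

lemma transportCost_diagonalPlan_add (hp : p ≠ 0) (h : ℕ → ℝ) (ρ : ℕ → ℕ → ℝ) :
    transportCost p (diagonalPlan h + ρ) = transportCost p ρ := by
  unfold transportCost
  refine tsum_congr fun i => tsum_congr fun j => ?_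
  by_cases hij : i = j
  · simp [hij, Real.zero_rpow hp]
  · simp [diagonalPlan, hij]

lemma transportCost_le_of_support_subset (hp : 0 ≤ p) (hρ : IsCouplingN ρ u v)
    (hu : ∀ n, N < n → u n = 0) (hv : ∀ n, N < n → v n = 0) :
    transportCost p ρ ≤ ENNReal.ofReal ((N : ℝ) ^ p) * ∑' i, ENNReal.ofReal (u i) := by
  have hcost : ∀ i j, ENNReal.ofReal (ρ i j) * ENNReal.ofReal (|(i : ℝ) - (j : ℝ)| ^ p) ≤
      ENNReal.ofReal (ρ i j) * ENNReal.ofReal ((N : ℝ) ^ p) := by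
    intro i j
    rcases (hρ.1 i j).eq_or_lt with h0 | h0
    · simp [← h0]
    have hi : i ≤ N := not_lt.1 fun hi => (h0.trans_le (hρ.le_left i j)).ne' (hu i hi)
    have hj : j ≤ N := not_lt.1 fun hj => (h0.trans_le (hρ.le_right i j)).ne' (hv j hj)
    have hij : |(i : ℝ) - j| ≤ N := abs_sub_le_of_nonneg_of_le i.cast_nonneg (Nat.cast_le.2 hi)
      j.cast_nonneg (Nat.cast_le.2 hj)
    gcongr
  have hrow : ∀ i, ∑' j, ENNReal.ofReal (ρ i j) = ENNReal.ofReal (u i) := fun i => by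
    rw [← ENNReal.ofReal_tsum_of_nonneg (hρ.1 i) (hρ.2.1 i).summable, (hρ.2.1 i).tsum_eq]
  calc transportCost p ρ
      ≤ ∑' (i : ℕ) (j : ℕ), ENNReal.ofReal (ρ i j) * ENNReal.ofReal ((N : ℝ) ^ p) :=
        ENNReal.tsum_le_tsum fun i => ENNReal.tsum_le_tsum fun j => hcost i j
    _ = ENNReal.ofReal ((N : ℝ) ^ p) * ∑' i, ENNReal.ofReal (u i) := by
        simp_rw [ENNReal.tsum_mul_right, hrow]
        exact mul_comm _ _

end Cost

section Wasserstein

variable {p : ℝ} {N : ℕ} {f g : ℕ → ℝ}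

lemma sum_abs_sub_le_two (hf : IsProbN f) (hg : IsProbN g) (s : Finset ℕ) :
    ∑ n ∈ s, |f n - g n| ≤ 2 := by
  calc ∑ n ∈ s, |f n - g n| ≤ ∑ n ∈ s, f n + ∑ n ∈ s, g n := by
        rw [← sum_add_distrib]
        exact sum_le_sum fun n _ => abs_sub_le_iff.2 ⟨by linarith [hg.1 n], by linarith [hf.1 n]⟩
    _ ≤ 1 + 1 := add_le_add (sum_le_hasSum s (fun n _ => hf.1 n) hf.2)
        (sum_le_hasSum s (fun n _ => hg.1 n) hg.2)
    _ = 2 := one_add_one_eq_two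

theorem wassersteinN_rpow_le_sum_abs_sub (hp : 0 < p) (hf : IsProbN f) (hg : IsProbN g)
    (hfN : ∀ n, N < n → f n = 0) (hgN : ∀ n, N < n → g n = 0) :
    WassersteinN p f g ^ p ≤ ENNReal.ofReal ((N : ℝ) ^ p * ∑ n ∈ range (N + 1), |f n - g n|) := by
  set h : ℕ → ℝ := fun n => min (f n) (g n)
  have hh0 : ∀ n, 0 ≤ h n := fun n => le_min (hf.1 n) (hg.1 n)
  obtain ⟨m, hm⟩ : Summable h :=
    .of_nonneg_of_le hh0 (fun n => min_le_left _ _) hf.2.summable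
  have hu0 : ∀ n, 0 ≤ (f - h) n := fun n => sub_nonneg.2 (min_le_left _ _)
  have hv0 : ∀ n, 0 ≤ (g - h) n := fun n => sub_nonneg.2 (min_le_right _ _)
  have huN : ∀ n, N < n → (f - h) n = 0 := fun n hn => by simp [h, hfN n hn, hgN n hn]
  have hvN : ∀ n, N < n → (g - h) n = 0 := fun n hn => by simp [h, hfN n hn, hgN n hn]
  have hρ := isCouplingN_mul_div hu0 hv0 (hf.2.sub hm) (hg.2.sub hm)
  have hπ := (isCouplingN_diagonalPlan hh0).add hρ
  rw [add_sub_cancel, add_sub_cancel] at hπ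
  have hmass : ∑' n, ENNReal.ofReal ((f - h) n) ≤
      ENNReal.ofReal (∑ n ∈ range (N + 1), |f n - g n|) := by
    rw [tsum_eq_sum (s := range (N + 1)) fun n hn => by simp [huN n (by simp at hn; omega)],
      ← ENNReal.ofReal_sum_of_nonneg fun n _ => hu0 n]
    refine ENNReal.ofReal_le_ofReal (sum_le_sum fun n _ => ?_)
    rcases le_total (f n) (g n) with hfg | hfg <;> simp [h, hfg, le_abs_self]
  calc WassersteinN p f g ^ p ≤ transportCost p (diagonalPlan h + _) :=
        wassersteinN_rpow_le_transportCost hp.ne' hπ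
    _ = transportCost p _ := transportCost_diagonalPlan_add hp.ne' h _
    _ ≤ ENNReal.ofReal ((N : ℝ) ^ p) * ∑' n, ENNReal.ofReal ((f - h) n) :=
        transportCost_le_of_support_subset hp.le hρ huN hvN
    _ ≤ ENNReal.ofReal ((N : ℝ) ^ p * ∑ n ∈ range (N + 1), |f n - g n|) := by
        rw [ENNReal.ofReal_mul (by positivity)]
        exact mul_le_mul' le_rfl hmass

end Wasserstein

section Toscani

variable {N : ℕ} {s : ℝ} {f g : ℕ → ℝ}

lemma ofReal_abs_pgfN_sub_le_toscaniN (hs : 0 ≤ s) {z : ℝ} (hz : z ∈ Set.Ioo (0 : ℝ) 1)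
    (f g : ℕ → ℝ) : ENNReal.ofReal |pgfN f z - pgfN g z| ≤ ToscaniN s f g := by
  refine le_trans ?_ (le_iSup (fun z : Set.Ioo (0 : ℝ) 1 =>
    ENNReal.ofReal (|pgfN f z - pgfN g z| / (1 - (z : ℝ)) ^ s)) ⟨z, hz⟩)
  have h1z : 0 < 1 - z := sub_pos.2 hz.2
  refine ENNReal.ofReal_le_ofReal ((le_div_iff₀ (by positivity)).2 ?_)
  exact mul_le_of_le_one_right (abs_nonneg _)
    (Real.rpow_le_one h1z.le (by linarith [hz.1]) hs)

lemma pgfN_eq_sum_fin (hfN : ∀ n, N < n → f n = 0) (z : ℝ) :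
    pgfN f z = ∑ n : Fin (N + 1), z ^ (n : ℕ) * f n := by
  rw [pgfN, Fin.sum_univ_eq_sum_range (fun n => z ^ n * f n)]
  exact tsum_eq_sum fun n hn => by simp [hfN n (by simp at hn; omega)]

lemma sum_abs_le_mul_sum_abs_mulVec {ι : Type*} [Fintype ι] [DecidableEq ι]
    {V : Matrix ι ι ℝ} (hV : IsUnit V.det) (d : ι → ℝ) :
    ∑ i, |d i| ≤ (∑ i, ∑ k, |V⁻¹ i k|) * ∑ k, |(V *ᵥ d) k| := by
  have hd : d = V⁻¹ *ᵥ (V *ᵥ d) := by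
    rw [Matrix.mulVec_mulVec, Matrix.nonsing_inv_mul V hV, Matrix.one_mulVec]
  rw [sum_mul]
  refine sum_le_sum fun i _ => ?_
  calc |d i| = |∑ k, V⁻¹ i k * (V *ᵥ d) k| := congr_arg abs (congr_fun hd i)
    _ ≤ ∑ k, |V⁻¹ i k| * |(V *ᵥ d) k| := by
        simpa only [abs_mul] using abs_sum_le_sum_abs (fun k => V⁻¹ i k * (V *ᵥ d) k) univ
    _ ≤ (∑ k, |V⁻¹ i k|) * ∑ k, |(V *ᵥ d) k| := by
        rw [sum_mul]
        gcongr with k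
        exact single_le_sum (fun k _ => abs_nonneg ((V *ᵥ d) k)) (mem_univ k)

theorem exists_ofReal_sum_abs_sub_le_toscaniN (N : ℕ) (hs : 0 ≤ s) :
    ∃ c ≥ 0, ∀ f g : ℕ → ℝ, (∀ n, N < n → f n = 0) → (∀ n, N < n → g n = 0) →
      ENNReal.ofReal (∑ n ∈ range (N + 1), |f n - g n|) ≤ ENNReal.ofReal c * ToscaniN s f g := by
  set x : Fin (N + 1) → ℝ := fun k => ((k : ℝ) + 1) / (N + 2)
  have hx : ∀ k, x k ∈ Set.Ioo (0 : ℝ) 1 := fun k => by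
    have hk : (k : ℝ) + 1 < N + 2 := by
      have := k.isLt
      norm_cast
      omega
    exact ⟨by positivity, (div_lt_one (by positivity)).2 hk⟩
  have hxinj : Function.Injective x := fun a b hab => by
    simpa [x, div_left_inj' (by positivity : (N : ℝ) + 2 ≠ 0), Fin.val_inj] using hab
  set V := Matrix.vandermonde x
  have hV : IsUnit V.det := (Matrix.det_vandermonde_ne_zero_iff.2 hxinj).isUnit
  set c₀ := ∑ i, ∑ k, |V⁻¹ i k|
  have hc₀ : 0 ≤ c₀ := by positivity
  refine ⟨c₀ * (N + 1), by positivity, fun f g hfN hgN => ?_⟩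
  set d : Fin (N + 1) → ℝ := fun n => f n - g n
  have hVd : ∀ k, (V *ᵥ d) k = pgfN f (x k) - pgfN g (x k) := fun k => by
    simp [pgfN_eq_sum_fin hfN, pgfN_eq_sum_fin hgN, ← sum_sub_distrib, V, d, Matrix.mulVec,
      dotProduct, mul_sub]
  calc ENNReal.ofReal (∑ n ∈ range (N + 1), |f n - g n|)
      = ENNReal.ofReal (∑ n, |d n|) := by
        rw [Fin.sum_univ_eq_sum_range (fun n => |f n - g n|)]
    _ ≤ ENNReal.ofReal c₀ * ∑ k, ENNReal.ofReal |(V *ᵥ d) k| := by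
        rw [← ENNReal.ofReal_sum_of_nonneg fun k _ => abs_nonneg _, ← ENNReal.ofReal_mul hc₀]
        exact ENNReal.ofReal_le_ofReal (sum_abs_le_mul_sum_abs_mulVec hV d)
    _ ≤ ENNReal.ofReal c₀ * ∑ _k : Fin (N + 1), ToscaniN s f g := by
        gcongr with k
        rw [hVd]
        exact ofReal_abs_pgfN_sub_le_toscaniN hs (hx k) f g
    _ = ENNReal.ofReal (c₀ * (N + 1)) * ToscaniN s f g := by
        rw [sum_const, card_univ, Fintype.card_fin, nsmul_eq_mul, ENNReal.ofReal_mul hc₀,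
          mul_assoc]
        norm_cast

end Toscani

lemma le_add_mul_rpow_of_le_mul_of_le {x a b T : ℝ≥0∞} {θ : ℝ} (hθ0 : 0 < θ) (hθ1 : θ ≤ 1)
    (ha : x ≤ a * T) (hb : x ≤ b) : x ≤ (a + b) * T ^ θ := by
  rcases le_total T 1 with hT | hT
  · calc x ≤ a * T ^ (1 : ℝ) := by rwa [ENNReal.rpow_one]
      _ ≤ (a + b) * T ^ θ := mul_le_mul' le_self_add (ENNReal.rpow_le_rpow_of_exponent_ge hT hθ1)
  · calc x ≤ b * 1 := by rwa [mul_one]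
      _ ≤ (a + b) * T ^ θ := mul_le_mul' le_add_self (ENNReal.one_le_rpow hT hθ0)

/-- For `N ≥ 1` and `α > 0`, there is a constant `C > 0` depending only
on `N`, `α` and `m_{2+α} = max{∑ n^{2+α} fₙ, ∑ n^{2+α} gₙ}` such that for all probability
distributions `f, g` on `ℕ` with the same mean value and support contained in
`{0, 1, …, N}`, one has `W₂(f,g)² ≤ C · D₂(f,g)^{α/(1+α)}`. -/
theorem wasserstein_two_sq_le_toscani_two (N : ℕ) (hN : 1 ≤ N) (α : ℝ) (hα : 0 < α) (m : ℝ) :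
    ∃ C > (0 : ℝ), ∀ f g : ℕ → ℝ, IsProbN f → IsProbN g →
      (∀ n : ℕ, N < n → f n = 0) → (∀ n : ℕ, N < n → g n = 0) →
      (∑' n : ℕ, (n : ℝ) * f n = ∑' n : ℕ, (n : ℝ) * g n) →
      max (∑' n : ℕ, (n : ℝ) ^ (2 + α) * f n) (∑' n : ℕ, (n : ℝ) ^ (2 + α) * g n) = m →
      WassersteinN 2 f g ^ 2 ≤ ENNReal.ofReal C * ToscaniN 2 f g ^ (α / (1 + α)) := by
  obtain ⟨c, hc, hcT⟩ := exists_ofReal_sum_abs_sub_le_toscaniN (s := 2) N zero_le_two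
  have hN2 : (0 : ℝ) < (N : ℝ) ^ 2 := pow_pos (Nat.cast_pos.2 hN) 2
  refine ⟨(N : ℝ) ^ 2 * c + (N : ℝ) ^ 2 * 2, by positivity, fun f g hf hg hfN hgN _ _ => ?_⟩
  have hW : WassersteinN 2 f g ^ 2 ≤
      ENNReal.ofReal ((N : ℝ) ^ 2 * ∑ n ∈ range (N + 1), |f n - g n|) := by
    simpa using wassersteinN_rpow_le_sum_abs_sub two_pos hf hg hfN hgN
  rw [ENNReal.ofReal_add (by positivity) (by positivity)]
  refine le_add_mul_rpow_of_le_mul_of_le (by positivity)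
    ((div_le_one (by positivity)).2 (by linarith)) ?_ ?_
  · rw [ENNReal.ofReal_mul hN2.le, mul_assoc]
    exact hW.trans ((ENNReal.ofReal_mul hN2.le).trans_le (by gcongr; exact hcT f g hfN hgN))
  · exact hW.trans (ENNReal.ofReal_le_ofReal (by gcongr; exact sum_abs_sub_le_two hf hg _))

end
end

section
/- Let f and g be probability measures on ℝ with equal mean value and finite second moments. Then d_2(f,g) ≤ (1/2) W_2(f,g)^2 + min{∫_ℝ |x|^2 df(x), ∫_ℝ |x|^2 dg(x)}^{1/2} · W_2(f,g). -/
/-! Writing `X, Y` for the two coordinates of a coupling `π` of `f` and `g`, the difference of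
the Fourier transforms at `ξ` is `∫ (e^{-iXξ} - e^{-iYξ}) dπ`. Since the means agree, the
first-order term `iξ(X - Y)` may be added for free, and the second-order Taylor bound for `e^{it}`
around `-Yξ` bounds the integrand by `ξ² ((X - Y)²/2 + |X - Y| |Y|)`. Cauchy–Schwarz and the
symmetric bound with `X` and `Y` exchanged then give
`‖f̂ ξ - ĝ ξ‖ / ξ² ≤ ‖X - Y‖²/2 + min(‖X‖, ‖Y‖) ‖X - Y‖` in `L²(π)`, and the infimum over `π`
passes through the right-hand side, which is monotone and continuous in `‖X - Y‖`. -/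

open MeasureTheory
open scoped ENNReal

noncomputable section

/-- `π` is a coupling of the probability measures `f` and `g` on `ℝ`. -/
def IsCouplingR (π : Measure (ℝ × ℝ)) (f g : Measure ℝ) : Prop :=
  π.map Prod.fst = f ∧ π.map Prod.snd = g

/-- The Wasserstein distance of order `p` between probability measures on `ℝ`. -/
def WassersteinR (p : ℝ) (f g : Measure ℝ) : ℝ≥0∞ :=
  (⨅ π : {π : Measure (ℝ × ℝ) // IsCouplingR π f g},
    ∫⁻ x, ENNReal.ofReal (|x.1 - x.2| ^ p) ∂π.1) ^ (1 / p)

/-- The Fourier transform of the measure `f`. -/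
def fourierT (f : Measure ℝ) (ξ : ℝ) : ℂ :=
  ∫ x, Complex.exp (-(Complex.I * (x : ℂ) * (ξ : ℂ))) ∂f

/-- The Toscani (Fourier-based) distance of order `s` between probability measures
on `ℝ`. -/
def ToscaniR (s : ℝ) (f g : Measure ℝ) : ℝ≥0∞ :=
  ⨆ ξ : {ξ : ℝ // ξ ≠ 0}, ENNReal.ofReal (‖fourierT f ξ - fourierT g ξ‖ / |ξ.1| ^ s)

/-- The cumulative distribution function of the measure `f`. -/
def cdfR (f : Measure ℝ) (x : ℝ) : ℝ := (f (Set.Iic x)).toReal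

section FourierBounds

open Complex ComplexConjugate

theorem Complex.norm_exp_I_mul_ofReal_sub_one_sub_le_of_nonneg {t : ℝ} (ht : 0 ≤ t) :
    ‖exp (I * t) - 1 - I * t‖ ≤ t ^ 2 / 2 := by
  have hderiv (s : ℝ) :
      HasDerivAt (fun s : ℝ => exp (I * s) - 1 - I * s) ((exp (I * s) - 1) * I) s := by
    have hlin : HasDerivAt (fun s : ℝ => I * (s : ℂ)) I s := by
      simpa using (ofRealCLM.hasDerivAt (x := s)).const_mul I
    exact ((hlin.cexp.sub_const 1).sub hlin).congr_deriv (by ring)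
  -- fencing: the derivative `(e^{is} - 1) i` has norm at most `s`, the derivative of `s²/2`
  refine image_norm_le_of_norm_deriv_right_le_deriv_boundary (a := 0) (b := t)
    (B := fun s => s ^ 2 / 2) (B' := id)
    (fun s _ => (hderiv s).continuousAt.continuousWithinAt)
    (fun s _ => (hderiv s).hasDerivWithinAt) (by simp)
    (fun s => by simpa using (hasDerivAt_pow 2 s).div_const 2) (fun s hs => ?_) ⟨ht, le_rfl⟩
  simpa [abs_of_nonneg hs.1] using Real.norm_exp_I_mul_ofReal_sub_one_le (x := s)

theorem Complex.norm_exp_I_mul_ofReal_sub_one_sub_le (t : ℝ) :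
    ‖exp (I * t) - 1 - I * t‖ ≤ t ^ 2 / 2 := by
  rcases le_total 0 t with ht | ht
  · exact norm_exp_I_mul_ofReal_sub_one_sub_le_of_nonneg ht
  · have hconj : exp (I * t) - 1 - I * t = conj (exp (I * ↑(-t)) - 1 - I * ↑(-t)) := by
      simp [← exp_conj, sub_eq_add_neg]
    rw [hconj, norm_conj, ← neg_sq]
    exact norm_exp_I_mul_ofReal_sub_one_sub_le_of_nonneg (neg_nonneg.2 ht)

theorem Complex.norm_exp_I_mul_add_sub_le (u v : ℝ) :
    ‖exp (I * (u + v)) - exp (I * v) - I * u‖ ≤ u ^ 2 / 2 + |u| * |v| := by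
  have hsplit : exp (I * (u + v)) - exp (I * v) - I * u =
      exp (I * v) * (exp (I * u) - 1 - I * u) + I * u * (exp (I * v) - 1) := by
    rw [mul_add, exp_add]; ring
  rw [hsplit]
  refine (norm_add_le _ _).trans (add_le_add ?_ ?_)
  · simpa [norm_mul, norm_exp_I_mul_ofReal] using norm_exp_I_mul_ofReal_sub_one_sub_le u
  · simpa [norm_mul] using mul_le_mul_of_nonneg_left
      (Real.norm_exp_I_mul_ofReal_sub_one_le (x := v)) (abs_nonneg u)

theorem Complex.norm_exp_neg_I_mul_sub_exp_add_le (x y ξ : ℝ) :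
    ‖exp (-(I * x * ξ)) - exp (-(I * y * ξ)) + I * (x - y) * ξ‖ ≤
      ξ ^ 2 * (2⁻¹ * (x - y) ^ 2 + |x - y| * |y|) := by
  have hsq : ξ ^ 2 * (2⁻¹ * (x - y) ^ 2 + |x - y| * |y|) =
      (-((x - y) * ξ)) ^ 2 / 2 + |-((x - y) * ξ)| * |-(y * ξ)| := by
    simp only [abs_neg, abs_mul]
    linear_combination (-(|x - y| * |y|)) * sq_abs ξ
  rw [hsq]
  convert norm_exp_I_mul_add_sub_le (-((x - y) * ξ)) (-(y * ξ)) using 2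
  push_cast
  ring_nf

variable {α : Type*} [MeasurableSpace α] {μ : Measure α}

theorem integral_abs_mul_abs_le_sqrt_mul_sqrt {X Y : α → ℝ} (hX : MemLp X 2 μ)
    (hY : MemLp Y 2 μ) :
    ∫ a, |X a| * |Y a| ∂μ ≤ √(∫ a, X a ^ 2 ∂μ) * √(∫ a, Y a ^ 2 ∂μ) := by
  have := integral_mul_norm_le_Lp_mul_Lq (μ := μ) Real.HolderConjugate.two_two
    (by simpa using hX) (by simpa using hY)
  simpa [Real.rpow_two, sq_abs, Real.sqrt_eq_rpow] using this

theorem integrable_cexp_neg_I_mul_mul [IsFiniteMeasure μ] {X : α → ℝ}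
    (hX : AEStronglyMeasurable X μ) (ξ : ℝ) :
    Integrable (fun a => exp (-(I * X a * ξ))) μ := by
  refine Integrable.of_bound (by fun_prop) 1 (ae_of_all _ fun a => ?_)
  rw [norm_exp]
  simp

theorem norm_integral_cexp_sub_integral_cexp_le [IsFiniteMeasure μ] {X Y : α → ℝ}
    (hX : MemLp X 2 μ) (hY : MemLp Y 2 μ) (hmean : ∫ a, X a ∂μ = ∫ a, Y a ∂μ) (ξ : ℝ) :
    ‖∫ a, exp (-(I * X a * ξ)) ∂μ - ∫ a, exp (-(I * Y a * ξ)) ∂μ‖ ≤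
      ξ ^ 2 * (2⁻¹ * ∫ a, (X a - Y a) ^ 2 ∂μ +
        √(∫ a, Y a ^ 2 ∂μ) * √(∫ a, (X a - Y a) ^ 2 ∂μ)) := by
  have hD : MemLp (X - Y) 2 μ := hX.sub hY
  have hX' := integrable_cexp_neg_I_mul_mul hX.1 ξ
  have hY' := integrable_cexp_neg_I_mul_mul hY.1 ξ
  have hlin : Integrable (fun a => I * (X a - Y a : ℝ) * ξ) μ :=
    (((hD.integrable one_le_two).ofReal (𝕜 := ℂ)).const_mul I).mul_const _
  have hlin_zero : ∫ a, I * (X a - Y a : ℝ) * ξ ∂μ = 0 := by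
    rw [integral_mul_const, integral_const_mul, integral_complex_ofReal,
      integral_sub (hX.integrable one_le_two) (hY.integrable one_le_two), hmean, sub_self]
    simp
  have hD2 : Integrable (fun a => (X a - Y a) ^ 2) μ := hD.integrable_sq
  have hDY : Integrable (fun a => |X a - Y a| * |Y a|) μ := hD.abs.integrable_mul hY.abs
  have hbound :
      Integrable (fun a => ξ ^ 2 * (2⁻¹ * (X a - Y a) ^ 2 + |X a - Y a| * |Y a|)) μ :=
    ((hD2.const_mul _).add hDY).const_mul _
  calc ‖∫ a, exp (-(I * X a * ξ)) ∂μ - ∫ a, exp (-(I * Y a * ξ)) ∂μ‖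
      = ‖∫ a, (exp (-(I * X a * ξ)) - exp (-(I * Y a * ξ)) + I * (X a - Y a : ℝ) * ξ) ∂μ‖ := by
        rw [integral_add (by exact hX'.sub hY') hlin, integral_sub hX' hY', hlin_zero, add_zero]
    _ ≤ ∫ a, ξ ^ 2 * (2⁻¹ * (X a - Y a) ^ 2 + |X a - Y a| * |Y a|) ∂μ :=
        norm_integral_le_of_norm_le hbound (ae_of_all _ fun a => by
          simpa using norm_exp_neg_I_mul_sub_exp_add_le (X a) (Y a) ξ)
    _ = ξ ^ 2 * (2⁻¹ * ∫ a, (X a - Y a) ^ 2 ∂μ + ∫ a, |X a - Y a| * |Y a| ∂μ) := by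
        rw [integral_const_mul, integral_add (hD2.const_mul _) hDY, integral_const_mul]
    _ ≤ _ := by
        gcongr
        rw [mul_comm]
        exact integral_abs_mul_abs_le_sqrt_mul_sqrt hD hY

theorem norm_integral_cexp_sub_integral_cexp_le_min [IsFiniteMeasure μ] {X Y : α → ℝ}
    (hX : MemLp X 2 μ) (hY : MemLp Y 2 μ) (hmean : ∫ a, X a ∂μ = ∫ a, Y a ∂μ) (ξ : ℝ) :
    ‖∫ a, exp (-(I * X a * ξ)) ∂μ - ∫ a, exp (-(I * Y a * ξ)) ∂μ‖ ≤
      ξ ^ 2 * (2⁻¹ * ∫ a, (X a - Y a) ^ 2 ∂μ +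
        √(min (∫ a, X a ^ 2 ∂μ) (∫ a, Y a ^ 2 ∂μ)) * √(∫ a, (X a - Y a) ^ 2 ∂μ)) := by
  rcases le_total (∫ a, X a ^ 2 ∂μ) (∫ a, Y a ^ 2 ∂μ) with h | h
  · have hswap : ∫ a, (Y a - X a) ^ 2 ∂μ = ∫ a, (X a - Y a) ^ 2 ∂μ :=
      integral_congr_ae (ae_of_all _ fun a => by ring)
    rw [min_eq_left h, norm_sub_rev, ← hswap]
    exact norm_integral_cexp_sub_integral_cexp_le hY hX hmean.symm ξ
  · rw [min_eq_right h]
    exact norm_integral_cexp_sub_integral_cexp_le hX hY hmean ξ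

end FourierBounds

namespace IsCouplingR

variable {π : Measure (ℝ × ℝ)} {f g : Measure ℝ}

theorem isProbabilityMeasure [IsProbabilityMeasure f] (hπ : IsCouplingR π f g) :
    IsProbabilityMeasure π := by
  obtain ⟨rfl, -⟩ := hπ
  exact Measure.isProbabilityMeasure_of_map Prod.fst

theorem integral_comp_fst {E : Type*} [NormedAddCommGroup E] [NormedSpace ℝ E]
    (hπ : IsCouplingR π f g) {h : ℝ → E} (hh : AEStronglyMeasurable h f) :
    ∫ p, h p.1 ∂π = ∫ x, h x ∂f := by
  obtain ⟨rfl, -⟩ := hπ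
  exact (integral_map measurable_fst.aemeasurable hh).symm

theorem integral_comp_snd {E : Type*} [NormedAddCommGroup E] [NormedSpace ℝ E]
    (hπ : IsCouplingR π f g) {h : ℝ → E} (hh : AEStronglyMeasurable h g) :
    ∫ p, h p.2 ∂π = ∫ x, h x ∂g := by
  obtain ⟨-, rfl⟩ := hπ
  exact (integral_map measurable_snd.aemeasurable hh).symm

theorem memLp_fst {p : ℝ≥0∞} (hπ : IsCouplingR π f g) (hf : MemLp id p f) :
    MemLp Prod.fst p π := by
  obtain ⟨rfl, -⟩ := hπ
  exact hf.comp_of_map measurable_fst.aemeasurable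

theorem memLp_snd {p : ℝ≥0∞} (hπ : IsCouplingR π f g) (hg : MemLp id p g) :
    MemLp Prod.snd p π := by
  obtain ⟨-, rfl⟩ := hπ
  exact hg.comp_of_map measurable_snd.aemeasurable

theorem norm_fourierT_sub_le [IsProbabilityMeasure f] (hπ : IsCouplingR π f g)
    (hf : MemLp id 2 f) (hg : MemLp id 2 g) (hmean : ∫ x, x ∂f = ∫ x, x ∂g) (ξ : ℝ) :
    ‖fourierT f ξ - fourierT g ξ‖ ≤
      ξ ^ 2 * (2⁻¹ * ∫ p, (p.1 - p.2) ^ 2 ∂π +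
        √(min (∫ x, x ^ 2 ∂f) (∫ x, x ^ 2 ∂g)) * √(∫ p, (p.1 - p.2) ^ 2 ∂π)) := by
  have := hπ.isProbabilityMeasure
  have hexp : Continuous fun x : ℝ => Complex.exp (-(Complex.I * x * ξ)) := by fun_prop
  rw [fourierT, fourierT, ← hπ.integral_comp_fst hexp.aestronglyMeasurable,
    ← hπ.integral_comp_snd hexp.aestronglyMeasurable,
    ← hπ.integral_comp_fst (h := fun x => x ^ 2) (by fun_prop),
    ← hπ.integral_comp_snd (h := fun x => x ^ 2) (by fun_prop)]
  refine norm_integral_cexp_sub_integral_cexp_le_min (hπ.memLp_fst hf) (hπ.memLp_snd hg) ?_ ξ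
  exact (hπ.integral_comp_fst (h := id) aestronglyMeasurable_id).trans
    (hmean.trans (hπ.integral_comp_snd (h := id) aestronglyMeasurable_id).symm)

theorem toscaniR_two_le [IsProbabilityMeasure f] (hπ : IsCouplingR π f g)
    (hf : MemLp id 2 f) (hg : MemLp id 2 g) (hmean : ∫ x, x ∂f = ∫ x, x ∂g) :
    ToscaniR 2 f g ≤
      2⁻¹ * ENNReal.ofReal √(∫ p, (p.1 - p.2) ^ 2 ∂π) ^ 2 +
        ENNReal.ofReal √(min (∫ x, x ^ 2 ∂f) (∫ x, x ^ 2 ∂g)) *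
          ENNReal.ofReal √(∫ p, (p.1 - p.2) ^ 2 ∂π) := by
  have hD2 : 0 ≤ ∫ p, (p.1 - p.2) ^ 2 ∂π := integral_nonneg fun p => sq_nonneg _
  rw [← ENNReal.ofReal_pow (Real.sqrt_nonneg _), Real.sq_sqrt hD2,
    ← ENNReal.ofReal_mul (Real.sqrt_nonneg _), ← ENNReal.ofReal_ofNat 2,
    ← ENNReal.ofReal_inv_of_pos two_pos, ← ENNReal.ofReal_mul (by norm_num),
    ← ENNReal.ofReal_add (by positivity) (by positivity)]
  refine iSup_le fun ⟨ξ, hξ⟩ => ENNReal.ofReal_le_ofReal ?_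
  rw [Real.rpow_two, sq_abs, div_le_iff₀ (by positivity)]
  exact (hπ.norm_fourierT_sub_le hf hg hmean ξ).trans_eq (mul_comm _ _)

end IsCouplingR

theorem wassersteinR_two_eq_iInf {f g : Measure ℝ} [IsProbabilityMeasure f]
    (hf : MemLp id 2 f) (hg : MemLp id 2 g) :
    WassersteinR 2 f g =
      ⨅ π : {π : Measure (ℝ × ℝ) // IsCouplingR π f g},
        ENNReal.ofReal √(∫ p, (p.1 - p.2) ^ 2 ∂π.1) := by
  have hcost (π : {π : Measure (ℝ × ℝ) // IsCouplingR π f g}) :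
      ∫⁻ p, ENNReal.ofReal (|p.1 - p.2| ^ (2 : ℝ)) ∂π.1 =
        ENNReal.ofReal (∫ p, (p.1 - p.2) ^ 2 ∂π.1) := by
    have := π.2.isProbabilityMeasure
    have hD2 : Integrable (fun p : ℝ × ℝ => (p.1 - p.2) ^ 2) π.1 :=
      ((π.2.memLp_fst hf).sub (π.2.memLp_snd hg)).integrable_sq
    rw [ofReal_integral_eq_lintegral_ofReal hD2 (ae_of_all _ fun _ => sq_nonneg _)]
    simp [sq_abs]
  rw [WassersteinR, iInf_congr hcost,
    Monotone.map_iInf_of_continuousAt ENNReal.continuous_rpow_const.continuousAt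
      (ENNReal.monotone_rpow_of_nonneg (by norm_num)) (ENNReal.top_rpow_of_pos (by norm_num))]
  congr! 2 with π
  rw [Function.comp_apply, Real.sqrt_eq_rpow, ENNReal.ofReal_rpow_of_nonneg
    (integral_nonneg fun p => sq_nonneg _) (by norm_num), one_div]

theorem toscani_two_le_wasserstein_two_real_general (f g : Measure ℝ)
    [IsProbabilityMeasure f]
    (hf2 : Integrable (fun x : ℝ => |x| ^ 2) f) (hg2 : Integrable (fun x : ℝ => |x| ^ 2) g)
    (hmean : ∫ x, x ∂f = ∫ x, x ∂g) :
    ToscaniR 2 f g ≤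
      2⁻¹ * WassersteinR 2 f g ^ 2 +
        ENNReal.ofReal (Real.sqrt (min (∫ x, |x| ^ 2 ∂f) (∫ x, |x| ^ 2 ∂g))) *
          WassersteinR 2 f g := by
  simp only [sq_abs] at hf2 hg2 ⊢
  have hf : MemLp id 2 f := (memLp_two_iff_integrable_sq aestronglyMeasurable_id).2 hf2
  have hg : MemLp id 2 g := (memLp_two_iff_integrable_sq aestronglyMeasurable_id).2 hg2
  set c := ENNReal.ofReal √(min (∫ x, x ^ 2 ∂f) (∫ x, x ^ 2 ∂g))
  have hmono : Monotone fun w : ℝ≥0∞ => 2⁻¹ * w ^ 2 + c * w := fun _ _ h => by dsimp only; gcongr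
  have hcont : Continuous fun w : ℝ≥0∞ => 2⁻¹ * w ^ 2 + c * w :=
    ((ENNReal.continuous_const_mul (by norm_num)).comp (ENNReal.continuous_pow 2)).add
      (ENNReal.continuous_const_mul ENNReal.ofReal_ne_top)
  rw [wassersteinR_two_eq_iInf hf hg,
    hmono.map_iInf_of_continuousAt hcont.continuousAt (by simp)]
  exact le_iInf fun π => π.2.toscaniR_two_le hf hg hmean

/-- For probability measures `f, g` on `ℝ` with equal mean value and
finite second moments,
`d₂(f,g) ≤ (1/2) W₂(f,g)² + min{∫ |x|² df, ∫ |x|² dg}^{1/2} · W₂(f,g)`. -/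
theorem toscani_two_le_wasserstein_two_real (f g : Measure ℝ)
    [IsProbabilityMeasure f] [IsProbabilityMeasure g]
    (hf2 : Integrable (fun x : ℝ => |x| ^ 2) f) (hg2 : Integrable (fun x : ℝ => |x| ^ 2) g)
    (hmean : ∫ x, x ∂f = ∫ x, x ∂g) :
    ToscaniR 2 f g ≤
      2⁻¹ * WassersteinR 2 f g ^ 2 +
        ENNReal.ofReal (Real.sqrt (min (∫ x, |x| ^ 2 ∂f) (∫ x, |x| ^ 2 ∂g))) *
          WassersteinR 2 f g :=
  toscani_two_le_wasserstein_two_real_general f g hf2 hg2 hmean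

end
end

section
/- Let α > 0 and let f and g be probability measures on ℝ such that M_{2+α} := max{∫_ℝ |x|^{2+α} df(x), ∫_ℝ |x|^{2+α} dg(x)} < ∞. Then W_2(f,g)^2 ≤ 2^{(2+α)/(1+α)} (α^{1/(1+α)} + α^{−α/(1+α)}) · M_{2+α}^{1/(1+α)} · W_1(f,g)^{α/(1+α)}. -/
open MeasureTheory
open scoped ENNReal

noncomputable section

/-! With `θ = α / (1 + α)` one has `2 = θ · 1 + (1 - θ)(2 + α)`, so Hölder's inequality gives
`∫ d² dπ ≤ (∫ d dπ)^θ (∫ d^(2+α) dπ)^(1-θ)` for `d = |x - y|` and every coupling `π`. The last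
factor is controlled by the marginals through `|x - y|^(2+α) ≤ 2^(1+α) (|x|^(2+α) + |y|^(2+α))`,
and taking the infimum over couplings yields `W₂² ≤ (2^(2+α) M_{2+α})^(1/(1+α)) W₁^θ`. This is
at least as strong as the claim, since `α^(1/(1+α)) + α^(-α/(1+α)) ≥ 1`. -/

theorem ENNReal.ofReal_abs_rpow (x : ℝ) {p : ℝ} (hp : 0 ≤ p) :
    ENNReal.ofReal (|x| ^ p) = ‖x‖ₑ ^ p := by
  rw [Real.enorm_eq_ofReal_abs, ENNReal.ofReal_rpow_of_nonneg (abs_nonneg x) hp]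

theorem lintegral_enorm_rpow_eq_ofReal_integral {μ : Measure ℝ} {p : ℝ} (hp : 0 ≤ p)
    (h : Integrable (fun x : ℝ => |x| ^ p) μ) :
    ∫⁻ x, ‖x‖ₑ ^ p ∂μ = ENNReal.ofReal (∫ x, |x| ^ p ∂μ) := by
  rw [ofReal_integral_eq_lintegral_ofReal h (ae_of_all _ fun x => by positivity)]
  simp only [ENNReal.ofReal_abs_rpow _ hp]

theorem ENNReal.iInf_rpow {ι : Sort*} (x : ι → ℝ≥0∞) {θ : ℝ} (hθ : 0 < θ) :
    (⨅ i, x i) ^ θ = ⨅ i, x i ^ θ :=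
  (ENNReal.orderIsoRpow θ hθ).map_iInf x

theorem lintegral_rpow_convexCombination_le {X : Type*} [MeasurableSpace X] {μ : Measure X}
    {d : X → ℝ≥0∞} (hd : AEMeasurable d μ) {a b s t : ℝ} (ha : 0 ≤ a) (hb : 0 ≤ b)
    (hs : 0 ≤ s) (ht : 0 ≤ t) (hst : s + t = 1) :
    ∫⁻ x, d x ^ (s * a + t * b) ∂μ ≤ (∫⁻ x, d x ^ a ∂μ) ^ s * (∫⁻ x, d x ^ b ∂μ) ^ t := by
  refine le_of_eq_of_le (lintegral_congr fun x => ?_)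
    (ENNReal.lintegral_mul_norm_pow_le (hd.pow_const a) (hd.pow_const b) hs ht hst)
  rw [← ENNReal.rpow_mul, ← ENNReal.rpow_mul, ← ENNReal.rpow_add_of_nonneg _ _
    (mul_nonneg ha hs) (mul_nonneg hb ht), mul_comm s, mul_comm t]

theorem isCouplingR_prod (f g : Measure ℝ) [IsProbabilityMeasure f] [IsProbabilityMeasure g] :
    IsCouplingR (f.prod g) f g := by
  constructor <;> simp

namespace IsCouplingR

variable {π : Measure (ℝ × ℝ)} {f g : Measure ℝ}

theorem lintegral_comp_fst (hπ : IsCouplingR π f g) {φ : ℝ → ℝ≥0∞} (hφ : Measurable φ) :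
    ∫⁻ z, φ z.1 ∂π = ∫⁻ x, φ x ∂f := by
  rw [← hπ.1, lintegral_map hφ measurable_fst]

theorem lintegral_comp_snd (hπ : IsCouplingR π f g) {φ : ℝ → ℝ≥0∞} (hφ : Measurable φ) :
    ∫⁻ z, φ z.2 ∂π = ∫⁻ x, φ x ∂g := by
  rw [← hπ.2, lintegral_map hφ measurable_snd]

theorem lintegral_enorm_sub_rpow_le (hπ : IsCouplingR π f g) {p : ℝ} (hp : 1 ≤ p) :
    ∫⁻ z, ‖z.1 - z.2‖ₑ ^ p ∂π ≤
      2 ^ (p - 1) * (∫⁻ x, ‖x‖ₑ ^ p ∂f + ∫⁻ x, ‖x‖ₑ ^ p ∂g) := by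
  have hφ : Measurable fun x : ℝ => ‖x‖ₑ ^ p := by fun_prop
  calc ∫⁻ z, ‖z.1 - z.2‖ₑ ^ p ∂π
      ≤ ∫⁻ z, 2 ^ (p - 1) * (‖z.1‖ₑ ^ p + ‖z.2‖ₑ ^ p) ∂π := by
        refine lintegral_mono fun z => ?_
        exact (ENNReal.rpow_le_rpow enorm_sub_le (by linarith)).trans
          (ENNReal.rpow_add_le_mul_rpow_add_rpow _ _ hp)
    _ = 2 ^ (p - 1) * (∫⁻ x, ‖x‖ₑ ^ p ∂f + ∫⁻ x, ‖x‖ₑ ^ p ∂g) := by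
        rw [lintegral_const_mul _ (by fun_prop), lintegral_add_left (by fun_prop),
          hπ.lintegral_comp_fst hφ, hπ.lintegral_comp_snd hφ]

end IsCouplingR

theorem wassersteinR_rpow_eq_iInf {p : ℝ} (hp : 0 < p) (f g : Measure ℝ) :
    WassersteinR p f g ^ p =
      ⨅ π : {π : Measure (ℝ × ℝ) // IsCouplingR π f g}, ∫⁻ z, ‖z.1 - z.2‖ₑ ^ p ∂π.1 := by
  simp only [WassersteinR, ← ENNReal.rpow_mul, one_div_mul_cancel hp.ne', ENNReal.rpow_one,
    ENNReal.ofReal_abs_rpow _ hp.le]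

theorem wassersteinR_rpow_le_mul_rpow_of_forall_isCouplingR {p q θ : ℝ} (hp : 0 < p)
    (hq : 0 < q) (hθ : 0 < θ) {f g : Measure ℝ} [IsProbabilityMeasure f]
    [IsProbabilityMeasure g] {K : ℝ≥0∞} (hK : K ≠ ⊤)
    (h : ∀ π, IsCouplingR π f g →
      ∫⁻ z, ‖z.1 - z.2‖ₑ ^ p ∂π ≤ K * (∫⁻ z, ‖z.1 - z.2‖ₑ ^ q ∂π) ^ θ) :
    WassersteinR p f g ^ p ≤ K * (WassersteinR q f g ^ q) ^ θ := by
  have : Nonempty {π : Measure (ℝ × ℝ) // IsCouplingR π f g} :=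
    ⟨⟨f.prod g, isCouplingR_prod f g⟩⟩
  rw [wassersteinR_rpow_eq_iInf hp, wassersteinR_rpow_eq_iInf hq, ENNReal.iInf_rpow _ hθ,
    ENNReal.mul_iInf fun h => absurd h hK]
  exact iInf_mono fun π => h π.1 π.2

theorem one_le_rpow_add_rpow_neg {α : ℝ} (hα : 0 < α) :
    1 ≤ α ^ (1 / (1 + α)) + α ^ (-α / (1 + α)) := by
  rcases le_total 1 α with h | h
  · have := Real.one_le_rpow h (by positivity : 0 ≤ 1 / (1 + α))
    linarith [Real.rpow_nonneg hα.le (-α / (1 + α))]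
  · have := Real.one_le_rpow_of_pos_of_le_one_of_nonpos hα h
      (by rw [neg_div]; exact neg_nonpos.2 (by positivity) : -α / (1 + α) ≤ 0)
    linarith [Real.rpow_nonneg hα.le (1 / (1 + α))]

theorem two_rpow_mul_add_rpow_le {α a b : ℝ} (hα : 0 < α) (ha : 0 ≤ a) (hb : 0 ≤ b) :
    (2 ^ (1 + α) * (ENNReal.ofReal a + ENNReal.ofReal b)) ^ (1 / (1 + α)) ≤
      ENNReal.ofReal (2 ^ ((2 + α) / (1 + α)) * (α ^ (1 / (1 + α)) + α ^ (-α / (1 + α))) *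
        max a b ^ (1 / (1 + α))) := by
  have hM : 0 ≤ max a b := le_max_of_le_left ha
  have hsum : 2 ^ (1 + α) * (a + b) ≤ 2 ^ (2 + α) * max a b := by
    rw [show (2 : ℝ) + α = 1 + α + 1 by ring, Real.rpow_add_one two_ne_zero, mul_assoc]
    gcongr
    linarith [le_max_left a b, le_max_right a b]
  rw [← ENNReal.ofReal_add ha hb, ← ENNReal.ofReal_ofNat 2, ENNReal.ofReal_rpow_of_pos two_pos,
    ← ENNReal.ofReal_mul (by positivity),
    ENNReal.ofReal_rpow_of_nonneg (by positivity) (by positivity)]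
  gcongr
  calc (2 ^ (1 + α) * (a + b)) ^ (1 / (1 + α))
      ≤ (2 ^ (2 + α) * max a b) ^ (1 / (1 + α)) := by gcongr
    _ = 2 ^ ((2 + α) / (1 + α)) * max a b ^ (1 / (1 + α)) := by
      rw [Real.mul_rpow (by positivity) hM, ← Real.rpow_mul zero_le_two, mul_one_div]
    _ ≤ _ := by
      rw [mul_right_comm]
      exact le_mul_of_one_le_right (by positivity) (one_le_rpow_add_rpow_neg hα)

/-- For `α > 0` and probability measures `f, g` on `ℝ` with finite
moments of order `2 + α`, setting `M_{2+α} := max{∫ |x|^{2+α} df, ∫ |x|^{2+α} dg}`,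
one has
`W₂(f,g)² ≤ 2^{(2+α)/(1+α)} (α^{1/(1+α)} + α^{-α/(1+α)}) · M_{2+α}^{1/(1+α)} · W₁(f,g)^{α/(1+α)}`. -/
theorem wasserstein_two_sq_le_wasserstein_one_real (α : ℝ) (hα : 0 < α) (f g : Measure ℝ)
    [IsProbabilityMeasure f] [IsProbabilityMeasure g]
    (hf : Integrable (fun x : ℝ => |x| ^ (2 + α)) f)
    (hg : Integrable (fun x : ℝ => |x| ^ (2 + α)) g) :
    WassersteinR 2 f g ^ 2 ≤
      ENNReal.ofReal
          ((2 : ℝ) ^ ((2 + α) / (1 + α)) * (α ^ (1 / (1 + α)) + α ^ (-α / (1 + α))) *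
            (max (∫ x, |x| ^ (2 + α) ∂f) (∫ x, |x| ^ (2 + α) ∂g)) ^ (1 / (1 + α))) *
        WassersteinR 1 f g ^ (α / (1 + α)) := by
  have hexp : α / (1 + α) * 1 + 1 / (1 + α) * (2 + α) = 2 := by field_simp; ring
  have hnonneg (μ : Measure ℝ) : 0 ≤ ∫ x, |x| ^ (2 + α) ∂μ :=
    integral_nonneg fun x => by positivity
  rw [← ENNReal.rpow_two, ← ENNReal.rpow_one (WassersteinR 1 f g)]
  refine wassersteinR_rpow_le_mul_rpow_of_forall_isCouplingR two_pos one_pos (by positivity)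
    ENNReal.ofReal_ne_top fun π hπ => ?_
  calc ∫⁻ z, ‖z.1 - z.2‖ₑ ^ (2 : ℝ) ∂π
      = ∫⁻ z, ‖z.1 - z.2‖ₑ ^ (α / (1 + α) * 1 + 1 / (1 + α) * (2 + α)) ∂π := by rw [hexp]
    _ ≤ (∫⁻ z, ‖z.1 - z.2‖ₑ ^ (1 : ℝ) ∂π) ^ (α / (1 + α)) *
          (∫⁻ z, ‖z.1 - z.2‖ₑ ^ (2 + α) ∂π) ^ (1 / (1 + α)) :=
      lintegral_rpow_convexCombination_le (by fun_prop) zero_le_one (by positivity)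
        (by positivity) (by positivity) (by field_simp; ring)
    _ ≤ (∫⁻ z, ‖z.1 - z.2‖ₑ ^ (1 : ℝ) ∂π) ^ (α / (1 + α)) *
          (2 ^ (1 + α) * (ENNReal.ofReal (∫ x, |x| ^ (2 + α) ∂f) +
            ENNReal.ofReal (∫ x, |x| ^ (2 + α) ∂g))) ^ (1 / (1 + α)) := by
      rw [← lintegral_enorm_rpow_eq_ofReal_integral (by positivity) hf,
        ← lintegral_enorm_rpow_eq_ofReal_integral (by positivity) hg]
      gcongr
      refine (hπ.lintegral_enorm_sub_rpow_le (by linarith)).trans_eq ?_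
      rw [show 2 + α - 1 = 1 + α by ring]
    _ ≤ _ := by
      rw [mul_comm]
      gcongr
      exact two_rpow_mul_add_rpow_le hα (hnonneg f) (hnonneg g)

end
end

section
/- Let f and g be probability measures on ℝ with finite moments of order 2+α for some α > 0, let F and G be their cumulative distribution functions, and set M_2 := max{∫_ℝ |x|^2 df(x), ∫_ℝ |x|^2 dg(x)}. Then ∫_ℝ |F(x) − G(x)| dx ≤ (2^{−1/3} + 2^{2/3}) · M_2^{1/3} · (∫_ℝ |F(x) − G(x)|^2 dx)^{1/3}. -/
open MeasureTheory
open scoped ENNReal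

noncomputable section

/-! Write `D = F - G` and split `ℝ` at `±R`. On `[-R, R]` the AM–GM bound
`|D| ≤ (a/2) D² + 1/(2a)` gives `∫ |D| ≤ (a/2) ∫ D² + R/a`. Outside, `|D|` is at most the sum
of the tail masses of `f` and `g`, and by Fubini `∫_R^∞ μ(x, ∞) dx = E (t - R)₊ ≤ E t² / (4R)`
(similarly on the left), so the tails contribute at most `M₂ / (2R)`. Taking `a = m / s²`,
`R = m² / s` with `m³ ≥ M₂`, `s³ ≥ ∫ D²` yields `2 m s`; letting `m, s` decrease to the cube
roots also covers the degenerate cases, and `2 ≤ 2^{-1/3} + 2^{2/3}`. -/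

open Set Filter Topology ProbabilityTheory

lemma cdfR_eq_cdf (μ : Measure ℝ) [IsProbabilityMeasure μ] : cdfR μ = cdf μ := by
  ext x
  rw [cdf_eq_real]
  rfl

lemma cdfR_sub_cdfR_eq (f g : Measure ℝ) [IsProbabilityMeasure f] [IsProbabilityMeasure g]
    (x : ℝ) : cdfR f x - cdfR g x = g.real (Ioi x) - f.real (Ioi x) := by
  simp only [cdfR, ← measureReal_def, ← compl_Ioi, probReal_compl_eq_one_sub measurableSet_Ioi]
  ring

lemma ofReal_abs_measureReal_sub_le {α : Type*} [MeasurableSpace α] (μ ν : Measure α)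
    [IsFiniteMeasure μ] [IsFiniteMeasure ν] (s : Set α) :
    ENNReal.ofReal |μ.real s - ν.real s| ≤ μ s + ν s := by
  rw [← ofReal_measureReal (μ := μ), ← ofReal_measureReal (μ := ν),
    ← ENNReal.ofReal_add measureReal_nonneg measureReal_nonneg]
  exact ENNReal.ofReal_le_ofReal
    (abs_le.2 ⟨by linarith [measureReal_nonneg (μ := μ) (s := s)],
      by linarith [measureReal_nonneg (μ := ν) (s := s)]⟩)

section Tails

variable (μ : Measure ℝ) [SFinite μ]

lemma lintegral_Ioi_measure_Ioi (R : ℝ) :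
    ∫⁻ x in Ioi R, μ (Ioi x) = ∫⁻ t, ENNReal.ofReal (t - R) ∂μ := by
  have hs : MeasurableSet {p : ℝ × ℝ | p.1 < p.2} := measurableSet_lt measurable_fst measurable_snd
  calc ∫⁻ x in Ioi R, μ (Ioi x) = (volume.restrict (Ioi R)).prod μ {p | p.1 < p.2} :=
        (Measure.prod_apply hs).symm
    _ = ∫⁻ t, volume (Ioo R t) ∂μ := by
        rw [Measure.prod_apply_symm hs]
        refine lintegral_congr fun t => ?_
        rw [Measure.restrict_apply' measurableSet_Ioi, inter_comm]
        rfl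
    _ = ∫⁻ t, ENNReal.ofReal (t - R) ∂μ := by simp only [Real.volume_Ioo]

lemma lintegral_Iio_measure_Iic (R : ℝ) :
    ∫⁻ x in Iio R, μ (Iic x) = ∫⁻ t, ENNReal.ofReal (R - t) ∂μ := by
  have hs : MeasurableSet {p : ℝ × ℝ | p.2 ≤ p.1} := measurableSet_le measurable_snd measurable_fst
  calc ∫⁻ x in Iio R, μ (Iic x) = (volume.restrict (Iio R)).prod μ {p | p.2 ≤ p.1} :=
        (Measure.prod_apply hs).symm
    _ = ∫⁻ t, volume (Ico t R) ∂μ := by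
        rw [Measure.prod_apply_symm hs]
        refine lintegral_congr fun t => ?_
        rw [Measure.restrict_apply' measurableSet_Iio]
        rfl
    _ = ∫⁻ t, ENNReal.ofReal (R - t) ∂μ := by simp only [Real.volume_Ico]

lemma ofReal_sub_add_ofReal_neg_sub_le {R : ℝ} (hR : 0 < R) (t : ℝ) :
    ENNReal.ofReal (t - R) + ENNReal.ofReal (-R - t) ≤ ENNReal.ofReal (|t| ^ 2 / (4 * R)) := by
  have hsq : |t| - R ≤ |t| ^ 2 / (4 * R) := by
    rw [le_div_iff₀ (by positivity)]
    nlinarith [sq_nonneg (|t| - 2 * R)]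
  rcases le_total 0 t with ht | ht
  · rw [ENNReal.ofReal_of_nonpos (by linarith : -R - t ≤ 0), add_zero]
    exact ENNReal.ofReal_le_ofReal (by linarith [le_abs_self t])
  · rw [ENNReal.ofReal_of_nonpos (by linarith : t - R ≤ 0), zero_add]
    exact ENNReal.ofReal_le_ofReal (by linarith [neg_le_abs t])

lemma lintegral_tails_le {R : ℝ} (hR : 0 < R) :
    (∫⁻ x in Iio (-R), μ (Iic x)) + ∫⁻ x in Ioi R, μ (Ioi x) ≤
      ∫⁻ t, ENNReal.ofReal (|t| ^ 2 / (4 * R)) ∂μ := by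
  rw [lintegral_Iio_measure_Iic μ, lintegral_Ioi_measure_Ioi μ, ← lintegral_add_right _ (by fun_prop)]
  exact lintegral_mono fun t => by
    rw [add_comm]
    exact ofReal_sub_add_ofReal_neg_sub_le hR t

end Tails

lemma setIntegral_abs_le_of_sq {α : Type*} [MeasurableSpace α] {μ : Measure α} {D : α → ℝ}
    (hD : Integrable (fun x => |D x| ^ 2) μ) {s : Set α} (hs : μ s ≠ ∞) {a : ℝ} (ha : 0 < a) :
    ∫ x in s, |D x| ∂μ ≤ a / 2 * ∫ x, |D x| ^ 2 ∂μ + μ.real s / (2 * a) := by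
  have amgm : ∀ x, |D x| ≤ a / 2 * |D x| ^ 2 + 1 / (2 * a) := fun x => by
    field_simp
    nlinarith [sq_nonneg (a * |D x| - 1)]
  have hbound : IntegrableOn (fun x => a / 2 * |D x| ^ 2 + 1 / (2 * a)) s μ :=
    (hD.const_mul _).integrableOn.add (integrableOn_const hs)
  calc ∫ x in s, |D x| ∂μ ≤ ∫ x in s, (a / 2 * |D x| ^ 2 + 1 / (2 * a)) ∂μ :=
        integral_mono_of_nonneg (ae_of_all _ fun _ => abs_nonneg _) hbound (ae_of_all _ amgm)
    _ = a / 2 * ∫ x in s, |D x| ^ 2 ∂μ + μ.real s / (2 * a) := by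
        rw [integral_add (hD.const_mul _).integrableOn (integrableOn_const hs), integral_const_mul,
          setIntegral_const, smul_eq_mul]
        ring
    _ ≤ a / 2 * ∫ x, |D x| ^ 2 ∂μ + μ.real s / (2 * a) := by
        gcongr ?_ + _
        exact mul_le_mul_of_nonneg_left
          (setIntegral_le_integral hD (ae_of_all _ fun _ => by positivity)) (by positivity)

section CdfDifference

variable (f g : Measure ℝ) [IsProbabilityMeasure f] [IsProbabilityMeasure g]

lemma abs_cdfR_sub_le_one (x : ℝ) : |cdfR f x - cdfR g x| ≤ 1 := by
  simp only [cdfR_eq_cdf]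
  exact abs_le.2 ⟨by linarith [cdf_nonneg f x, cdf_le_one g x],
    by linarith [cdf_nonneg g x, cdf_le_one f x]⟩

lemma measurable_cdfR_sub : Measurable fun x => cdfR f x - cdfR g x := by
  simp only [cdfR_eq_cdf]
  exact (monotone_cdf f).measurable.sub (monotone_cdf g).measurable

lemma lintegral_compl_Icc_abs_cdfR_sub_le {R : ℝ} (hR : 0 < R) :
    ∫⁻ x in (Icc (-R) R)ᶜ, ENNReal.ofReal |cdfR f x - cdfR g x| ≤
      ∫⁻ t, ENNReal.ofReal (|t| ^ 2 / (4 * R)) ∂f +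
        ∫⁻ t, ENNReal.ofReal (|t| ^ 2 / (4 * R)) ∂g := by
  have hcompl : (Icc (-R) R)ᶜ = Iio (-R) ∪ Ioi R := by
    ext x
    simp [or_iff_not_imp_left]
  have hmono : ∀ μ : Measure ℝ, [IsFiniteMeasure μ] → Monotone fun x => μ (Iic x) :=
    fun μ _ x y hxy => measure_mono (Iic_subset_Iic.2 hxy)
  have hanti : ∀ μ : Measure ℝ, [IsFiniteMeasure μ] → Antitone fun x => μ (Ioi x) :=
    fun μ _ x y hxy => measure_mono (Ioi_subset_Ioi hxy)
  rw [hcompl, lintegral_union measurableSet_Ioi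
    ((Iic_disjoint_Ioi (by linarith)).mono_left Iio_subset_Iic_self)]
  calc _ ≤ (∫⁻ x in Iio (-R), (f (Iic x) + g (Iic x))) +
        ∫⁻ x in Ioi R, (g (Ioi x) + f (Ioi x)) := by
        gcongr with x x
        · exact ofReal_abs_measureReal_sub_le f g (Iic x)
        · rw [cdfR_sub_cdfR_eq]
          exact ofReal_abs_measureReal_sub_le g f (Ioi x)
    _ = ((∫⁻ x in Iio (-R), f (Iic x)) + ∫⁻ x in Ioi R, f (Ioi x)) +
        ((∫⁻ x in Iio (-R), g (Iic x)) + ∫⁻ x in Ioi R, g (Ioi x)) := by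
        rw [lintegral_add_left (hmono f).measurable, lintegral_add_left (hanti g).measurable]
        ring
    _ ≤ _ := add_le_add (lintegral_tails_le f hR) (lintegral_tails_le g hR)

variable {f g}

lemma integrable_cdfR_sub (hf : Integrable (fun x : ℝ => |x| ^ 2) f)
    (hg : Integrable (fun x : ℝ => |x| ^ 2) g) : Integrable fun x => cdfR f x - cdfR g x := by
  refine ⟨(measurable_cdfR_sub f g).aestronglyMeasurable, ?_⟩
  simp only [HasFiniteIntegral, Real.enorm_eq_ofReal_abs]
  rw [← lintegral_add_compl _ (measurableSet_Icc (a := -1) (b := 1))]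
  refine ENNReal.add_lt_top.2 ⟨?_, ?_⟩
  · calc ∫⁻ x in Icc (-1) 1, ENNReal.ofReal |cdfR f x - cdfR g x| ≤ ∫⁻ x in Icc (-1) 1, 1 :=
          lintegral_mono fun x => ENNReal.ofReal_le_one.2 (abs_cdfR_sub_le_one f g x)
      _ < ∞ := by simp
  · exact (lintegral_compl_Icc_abs_cdfR_sub_le f g one_pos).trans_lt
      (ENNReal.add_lt_top.2 ⟨(hf.div_const _).lintegral_lt_top, (hg.div_const _).lintegral_lt_top⟩)

lemma integral_abs_cdfR_sub_le (hf : Integrable (fun x : ℝ => |x| ^ 2) f)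
    (hg : Integrable (fun x : ℝ => |x| ^ 2) g) {a R : ℝ} (ha : 0 < a) (hR : 0 < R) :
    ∫ x, |cdfR f x - cdfR g x| ≤
      a / 2 * (∫ x, |cdfR f x - cdfR g x| ^ 2) + R / a +
        max (∫ x, |x| ^ 2 ∂f) (∫ x, |x| ^ 2 ∂g) / (2 * R) := by
  have hD := (integrable_cdfR_sub hf hg).abs
  have hD2 : Integrable (fun x => |cdfR f x - cdfR g x| ^ 2) :=
    hD.mono' (hD.aestronglyMeasurable.pow 2) (ae_of_all _ fun x => by
      rw [Real.norm_eq_abs, abs_pow, abs_abs, sq]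
      exact mul_le_of_le_one_right (abs_nonneg _) (abs_cdfR_sub_le_one f g x))
  have inner := setIntegral_abs_le_of_sq hD2 (s := Icc (-R) R) measure_Icc_lt_top.ne ha
  rw [Real.volume_real_Icc_of_le (by linarith), show (R - -R) / (2 * a) = R / a by ring] at inner
  have outer : ∫ x in (Icc (-R) R)ᶜ, |cdfR f x - cdfR g x| ≤
      max (∫ x, |x| ^ 2 ∂f) (∫ x, |x| ^ 2 ∂g) / (2 * R) := by
    rw [integral_eq_lintegral_of_nonneg_ae (ae_of_all _ fun _ => abs_nonneg _)
      hD.aestronglyMeasurable.restrict]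
    refine ENNReal.toReal_le_of_le_ofReal (by positivity)
      ((lintegral_compl_Icc_abs_cdfR_sub_le f g hR).trans ?_)
    rw [← ofReal_integral_eq_lintegral_ofReal (hf.div_const _) (ae_of_all _ fun _ => by positivity),
      ← ofReal_integral_eq_lintegral_ofReal (hg.div_const _) (ae_of_all _ fun _ => by positivity),
      ← ENNReal.ofReal_add (by positivity) (by positivity), integral_div, integral_div]
    refine ENNReal.ofReal_le_ofReal ?_
    have := le_max_left (∫ x, |x| ^ 2 ∂f) (∫ x, |x| ^ 2 ∂g)
    have := le_max_right (∫ x, |x| ^ 2 ∂f) (∫ x, |x| ^ 2 ∂g)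
    rw [← add_div, div_le_div_iff₀ (by positivity) (by positivity)]
    nlinarith
  calc ∫ x, |cdfR f x - cdfR g x|
      = (∫ x in Icc (-R) R, |cdfR f x - cdfR g x|) + ∫ x in (Icc (-R) R)ᶜ, |cdfR f x - cdfR g x| :=
        (integral_add_compl measurableSet_Icc hD).symm
    _ ≤ _ := add_le_add inner outer

end CdfDifference

lemma le_two_mul_rpow_mul_rpow_of_forall {L S M : ℝ} (hS : 0 ≤ S) (hM : 0 ≤ M)
    (h : ∀ a R : ℝ, 0 < a → 0 < R → L ≤ a / 2 * S + R / a + M / (2 * R)) :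
    L ≤ 2 * M ^ ((1 : ℝ) / 3) * S ^ ((1 : ℝ) / 3) := by
  have key : ∀ m s : ℝ, 0 < m → 0 < s → M ≤ m ^ 3 → S ≤ s ^ 3 → L ≤ 2 * m * s := by
    intro m s hm hs hMm hSs
    refine (h (m / s ^ 2) (m ^ 2 / s) (by positivity) (by positivity)).trans ?_
    have e₁ : m / s ^ 2 / 2 * S ≤ m * s / 2 := by
      rw [div_div, div_mul_eq_mul_div, div_le_div_iff₀ (by positivity) (by positivity)]
      nlinarith [mul_le_mul_of_nonneg_left hSs hm.le]
    have e₂ : m ^ 2 / s / (m / s ^ 2) = m * s := by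
      field_simp
    have e₃ : M / (2 * (m ^ 2 / s)) ≤ m * s / 2 := by
      rw [div_le_div_iff₀ (by positivity) (by positivity)]
      field_simp
      nlinarith [mul_le_mul_of_nonneg_left hMm hs.le]
    linarith
  have cube_rpow : ∀ x : ℝ, 0 ≤ x → (x ^ ((1 : ℝ) / 3)) ^ 3 = x := fun x hx => by
    rw [← Real.rpow_natCast, ← Real.rpow_mul hx]
    norm_num
  set m := M ^ ((1 : ℝ) / 3)
  set s := S ^ ((1 : ℝ) / 3)
  have hm : 0 ≤ m := Real.rpow_nonneg hM _
  have hs : 0 ≤ s := Real.rpow_nonneg hS _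
  have hlim : Tendsto (fun ε => 2 * (m + ε) * (s + ε)) (𝓝[>] 0) (𝓝 (2 * m * s)) := by
    refine tendsto_nhdsWithin_of_tendsto_nhds ?_
    simpa using ((by fun_prop : Continuous fun ε : ℝ => 2 * (m + ε) * (s + ε)).tendsto 0)
  refine ge_of_tendsto hlim (eventually_nhdsWithin_of_forall fun ε (hε : 0 < ε) => ?_)
  refine key _ _ (by positivity) (by positivity) ?_ ?_
  · calc M = m ^ 3 := (cube_rpow M hM).symm
      _ ≤ (m + ε) ^ 3 := by gcongr; linarith
  · calc S = s ^ 3 := (cube_rpow S hS).symm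
      _ ≤ (s + ε) ^ 3 := by gcongr; linarith

lemma two_le_two_rpow_neg_one_third_add_two_rpow_two_thirds :
    (2 : ℝ) ≤ 2 ^ (-(1 : ℝ) / 3) + 2 ^ ((2 : ℝ) / 3) := by
  have ht : (0 : ℝ) < 2 ^ (-(1 : ℝ) / 3) := by positivity
  have ht3 : ((2 : ℝ) ^ (-(1 : ℝ) / 3)) ^ 3 = 1 / 2 := by
    rw [← Real.rpow_natCast, ← Real.rpow_mul (by norm_num)]
    norm_num
  have h2 : (2 : ℝ) ^ ((2 : ℝ) / 3) = 2 * 2 ^ (-(1 : ℝ) / 3) := by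
    rw [← Real.rpow_one_add' (by norm_num) (by norm_num)]
    norm_num
  rw [h2]
  nlinarith [sq_nonneg ((2 : ℝ) ^ (-(1 : ℝ) / 3) - 2 / 3)]

lemma integrable_abs_sq_of_integrable_abs_rpow {μ : Measure ℝ} [IsFiniteMeasure μ] {p : ℝ}
    (hp : 2 ≤ p) (h : Integrable (fun x : ℝ => |x| ^ p) μ) :
    Integrable (fun x : ℝ => |x| ^ 2) μ := by
  have := integrable_norm_rpow_of_le (f := fun x : ℝ => x) aestronglyMeasurable_id (p := 2)
    (by norm_num) (by linarith) hp (by simpa only [Real.norm_eq_abs] using h)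
  simpa [Real.norm_eq_abs] using this

/-- For probability measures `f, g` on `ℝ` with finite moments of order
`2 + α` for some `α > 0`, with cumulative distribution functions `F, G` and
`M₂ := max{∫ |x|² df, ∫ |x|² dg}`, one has
`∫ |F − G| ≤ (2^{-1/3} + 2^{2/3}) · M₂^{1/3} · (∫ |F − G|²)^{1/3}`. -/
theorem L1_cdf_le_L2_cdf (α : ℝ) (hα : 0 < α) (f g : Measure ℝ)
    [IsProbabilityMeasure f] [IsProbabilityMeasure g]
    (hf : Integrable (fun x : ℝ => |x| ^ (2 + α)) f)
    (hg : Integrable (fun x : ℝ => |x| ^ (2 + α)) g) :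
    ∫ x, |cdfR f x - cdfR g x| ≤
      ((2 : ℝ) ^ (-(1 : ℝ) / 3) + (2 : ℝ) ^ ((2 : ℝ) / 3)) *
          (max (∫ x, |x| ^ 2 ∂f) (∫ x, |x| ^ 2 ∂g)) ^ ((1 : ℝ) / 3) *
        (∫ x, |cdfR f x - cdfR g x| ^ 2) ^ ((1 : ℝ) / 3) := by
  have hf₂ := integrable_abs_sq_of_integrable_abs_rpow (by linarith) hf
  have hg₂ := integrable_abs_sq_of_integrable_abs_rpow (by linarith) hg
  have hM : 0 ≤ max (∫ x, |x| ^ 2 ∂f) (∫ x, |x| ^ 2 ∂g) :=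
    le_max_of_le_left (integral_nonneg fun _ => by positivity)
  have hS : 0 ≤ ∫ x, |cdfR f x - cdfR g x| ^ 2 := integral_nonneg fun _ => by positivity
  refine (le_two_mul_rpow_mul_rpow_of_forall hS hM
    fun a R ha hR => integral_abs_cdfR_sub_le hf₂ hg₂ ha hR).trans ?_
  gcongr
  exact two_le_two_rpow_neg_one_third_add_two_rpow_two_thirds
end
end

section
/- Let N ∈ ℕ with N ≥ 1 and let f and g be probability distributions on ℕ with the same mean value and with supp(f) ∪ supp(g) ⊆ {0, 1, ..., N}. Let F_n = ∑_{k=0}^n f_k and G_n = ∑_{k=0}^n g_k. Then for every z ∈ (0,1), |f̂(z) − ĝ(z)| / (1−z)^2 = |∑_{n=1}^N (F_n − G_n) ∑_{k=0}^{n−1} z^k|. -/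
open scoped ENNReal

noncomputable section

/-
Put `h = f - g`, `H n = ∑_{k ≤ n} h k` and `[n]_z = ∑_{k < n} z ^ k`. Summing by parts twice
expresses `∑_{n ≤ N} z ^ n h n` through the total mass `∑ h`, the first moment `∑ n h n` and
`(1 - z)² ∑_{n=1}^N H n [n]_z`; equal masses and equal means kill the first two terms.
-/

open Finset

theorem tsum_eq_sum_range_of_forall_lt {M : Type*} [AddCommMonoid M] [TopologicalSpace M]
    {φ : ℕ → M} {N : ℕ} (hφ : ∀ n, N < n → φ n = 0) :
    ∑' n, φ n = ∑ n ∈ range (N + 1), φ n :=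
  tsum_eq_sum fun n hn => hφ n (by simpa using hn)

theorem tsum_mul_eq_sum_range_of_forall_lt {R : Type*} [Semiring R] [TopologicalSpace R]
    {f : ℕ → R} {N : ℕ} (hf : ∀ n, N < n → f n = 0) (u : ℕ → R) :
    ∑' n, u n * f n = ∑ n ∈ range (N + 1), u n * f n :=
  tsum_eq_sum_range_of_forall_lt fun n hn => by rw [hf n hn, mul_zero]

theorem sum_range_pow_mul_eq_abel {R : Type*} [CommRing R] (z : R) (h : ℕ → R) (N : ℕ) :
    ∑ n ∈ range (N + 1), z ^ n * h n =
      ((1 - z) * (N + 1) + z ^ (N + 1)) * ∑ n ∈ range (N + 1), h n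
        - (1 - z) * ∑ n ∈ range (N + 1), (n : R) * h n
        - (1 - z) ^ 2 * ∑ n ∈ Icc 1 N, (∑ k ∈ range (n + 1), h k) * ∑ k ∈ range n, z ^ k := by
  induction N with
  | zero => simp
  | succ N ih =>
    have hgeom : (1 - z) * ∑ k ∈ range (N + 1), z ^ k = 1 - z ^ (N + 1) := by
      rw [mul_comm, geom_sum_mul_neg]
    rw [sum_Icc_succ_top (by omega), sum_range_succ (fun n => z ^ n * h n),
      sum_range_succ h, sum_range_succ (fun n => (n : R) * h n)]
    push_cast
    linear_combination ih + (1 - z) * (∑ k ∈ range (N + 1), h k + h (N + 1)) * hgeom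

theorem sum_range_pow_mul_of_sum_eq_zero {R : Type*} [CommRing R] (z : R) {h : ℕ → R} {N : ℕ}
    (hmass : ∑ n ∈ range (N + 1), h n = 0) (hmean : ∑ n ∈ range (N + 1), (n : R) * h n = 0) :
    ∑ n ∈ range (N + 1), z ^ n * h n =
      -((1 - z) ^ 2 * ∑ n ∈ Icc 1 N, (∑ k ∈ range (n + 1), h k) * ∑ k ∈ range n, z ^ k) := by
  rw [sum_range_pow_mul_eq_abel, hmass, hmean]
  ring

theorem pgf_diff_eq_cdf_sum_general (N : ℕ) (f g : ℕ → ℝ)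
    (hf : IsProbN f) (hg : IsProbN g)
    (hfsupp : ∀ n : ℕ, N < n → f n = 0) (hgsupp : ∀ n : ℕ, N < n → g n = 0)
    (hmean : ∑' n : ℕ, (n : ℝ) * f n = ∑' n : ℕ, (n : ℝ) * g n)
    (z : ℝ) (hz : z ∈ Set.Ioo (0 : ℝ) 1) :
    |pgfN f z - pgfN g z| / (1 - z) ^ 2 =
      |∑ n ∈ Finset.Icc 1 N,
        ((∑ k ∈ Finset.range (n + 1), f k) - ∑ k ∈ Finset.range (n + 1), g k) *
          ∑ k ∈ Finset.range n, z ^ k| := by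
  have hsupp : ∀ n, N < n → f n - g n = 0 := fun n hn => by
    rw [hfsupp n hn, hgsupp n hn, sub_self]
  have hmass : ∑ n ∈ range (N + 1), (f n - g n) = 0 := by
    rw [← tsum_eq_sum_range_of_forall_lt hsupp, hf.2.summable.tsum_sub hg.2.summable,
      hf.2.tsum_eq, hg.2.tsum_eq, sub_self]
  have hmoment : ∑ n ∈ range (N + 1), (n : ℝ) * (f n - g n) = 0 := by
    rw [tsum_mul_eq_sum_range_of_forall_lt hfsupp, tsum_mul_eq_sum_range_of_forall_lt hgsupp,
      ← sub_eq_zero, ← sum_sub_distrib] at hmean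
    simpa only [mul_sub] using hmean
  have hpgf : pgfN f z - pgfN g z = ∑ n ∈ range (N + 1), z ^ n * (f n - g n) := by
    rw [pgfN, pgfN, tsum_mul_eq_sum_range_of_forall_lt hfsupp,
      tsum_mul_eq_sum_range_of_forall_lt hgsupp, ← sum_sub_distrib]
    simp only [mul_sub]
  have hz1 : 0 < (1 - z) ^ 2 := pow_pos (sub_pos.2 hz.2) 2
  rw [hpgf, sum_range_pow_mul_of_sum_eq_zero z hmass hmoment, abs_neg, abs_mul,
    abs_of_pos hz1, mul_div_cancel_left₀ _ hz1.ne']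
  simp only [sum_sub_distrib]

/-- For `N ≥ 1` and probability distributions `f, g` on `ℕ` with the
same mean value and support contained in `{0, 1, …, N}`, with `Fₙ = ∑_{k=0}^n f_k` and
`Gₙ = ∑_{k=0}^n g_k`, for every `z ∈ (0,1)` one has
`|f̂(z) − ĝ(z)| / (1 − z)² = |∑_{n=1}^N (Fₙ − Gₙ) ∑_{k=0}^{n-1} z^k|`. -/
theorem pgf_diff_eq_cdf_sum (N : ℕ) (hN : 1 ≤ N) (f g : ℕ → ℝ)
    (hf : IsProbN f) (hg : IsProbN g)
    (hfsupp : ∀ n : ℕ, N < n → f n = 0) (hgsupp : ∀ n : ℕ, N < n → g n = 0)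
    (hmean : ∑' n : ℕ, (n : ℝ) * f n = ∑' n : ℕ, (n : ℝ) * g n)
    (z : ℝ) (hz : z ∈ Set.Ioo (0 : ℝ) 1) :
    |pgfN f z - pgfN g z| / (1 - z) ^ 2 =
      |∑ n ∈ Finset.Icc 1 N,
        ((∑ k ∈ Finset.range (n + 1), f k) - ∑ k ∈ Finset.range (n + 1), g k) *
          ∑ k ∈ Finset.range n, z ^ k| :=
  pgf_diff_eq_cdf_sum_general N f g hf hg hfsupp hgsupp hmean z hz

end
end

section
/- Let α > 0 and let f and g be probability distributions on ℕ such that m_{2+α} := max{∑_{n≥0} n^{2+α} f_n, ∑_{n≥0} n^{2+α} g_n} < ∞. Then W_2(f,g)^2 ≤ 2^{(2+α)/(1+α)} (α^{1/(1+α)} + α^{−α/(1+α)}) · m_{2+α}^{1/(1+α)} · W_1(f,g)^{α/(1+α)}. -/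
open scoped ENNReal

noncomputable section

/-
Split the quadratic cost with a threshold `N > 0`: for `x ≥ 0`,
`x² ≤ N x + N^{-α} x^{2+α}`. Integrated against any coupling this bounds the quadratic cost by
`N` times the linear cost plus `N^{-α}` times the `(2+α)`-cost, and the latter is at most
`2 m_{2+α} ≤ 2^{2+α} m_{2+α}` because `|i - j|^{2+α} ≤ i^{2+α} + j^{2+α}`. Passing to optimal couplings and minimising
`N a + N^{-α} B` over `N` gives the constant of the theorem. Since distances between integers are
`0` or at least `1`, all costs are dominated by the `(2+α)`-cost, so `W₁` is finite.
-/

open Filter Topology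

def couplingCost (p : ℝ) (π : ℕ → ℕ → ℝ) : ℝ≥0∞ :=
  ∑' (i : ℕ) (j : ℕ), ENNReal.ofReal (π i j) * ENNReal.ofReal (|(i : ℝ) - (j : ℝ)| ^ p)

def optimalCostN (p : ℝ) (f g : ℕ → ℝ) : ℝ≥0∞ :=
  ⨅ π : {π : ℕ → ℕ → ℝ // IsCouplingN π f g}, couplingCost p π.1

lemma wassersteinN_eq_optimalCostN_rpow (p : ℝ) (f g : ℕ → ℝ) :
    WassersteinN p f g = optimalCostN p f g ^ (1 / p) := rfl

lemma abs_sub_rpow_le_rpow_add_rpow {x y p : ℝ} (hx : 0 ≤ x) (hy : 0 ≤ y) (hp : 0 ≤ p) :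
    |x - y| ^ p ≤ x ^ p + y ^ p := by
  rcases le_total x y with hxy | hyx
  · have : |x - y| ^ p ≤ y ^ p :=
      Real.rpow_le_rpow (abs_nonneg _) (by rw [abs_sub_comm, abs_of_nonneg] <;> linarith) hp
    linarith [Real.rpow_nonneg hx p]
  · have : |x - y| ^ p ≤ x ^ p :=
      Real.rpow_le_rpow (abs_nonneg _) (by rw [abs_of_nonneg] <;> linarith) hp
    linarith [Real.rpow_nonneg hy p]

lemma abs_natCast_sub_rpow_le_rpow {p q : ℝ} (hp : 0 < p) (hpq : p ≤ q) (i j : ℕ) :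
    |(i : ℝ) - j| ^ p ≤ |(i : ℝ) - j| ^ q := by
  rcases eq_or_ne i j with rfl | hij
  · simp [Real.zero_rpow hp.ne', Real.zero_rpow (hp.trans_le hpq).ne']
  · refine Real.rpow_le_rpow_of_exponent_le ?_ hpq
    have : (1 : ℤ) ≤ |(i : ℤ) - j| := Int.one_le_abs (sub_ne_zero.mpr (by exact_mod_cast hij))
    exact_mod_cast this

lemma rpow_two_le_mul_add_rpow_neg_mul {x N α : ℝ} (hx : 0 ≤ x) (hN : 0 < N) (hα : 0 < α) :
    x ^ (2 : ℝ) ≤ N * x ^ (1 : ℝ) + N ^ (-α) * x ^ (2 + α) := by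
  have hsq : x ^ (2 : ℝ) = x * x := by rw [Real.rpow_two, sq]
  rcases le_or_gt x N with hxN | hNx
  · have : 0 ≤ N ^ (-α) * x ^ (2 + α) := by positivity
    rw [hsq, Real.rpow_one]
    nlinarith
  · -- beyond the threshold, `(x / N)^α ≥ 1`
    have hx0 : 0 < x := hN.trans hNx
    have hge : 1 ≤ N ^ (-α) * x ^ α := by
      rw [Real.rpow_neg hN.le, inv_mul_eq_div, one_le_div (by positivity)]
      exact Real.rpow_le_rpow hN.le hNx.le hα.le
    have : x ^ (2 : ℝ) ≤ N ^ (-α) * x ^ (2 + α) := by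
      calc x ^ (2 : ℝ) ≤ (N ^ (-α) * x ^ α) * x ^ (2 : ℝ) :=
            le_mul_of_one_le_left (by positivity) hge
        _ = N ^ (-α) * x ^ (2 + α) := by rw [Real.rpow_add hx0]; ring
    linarith [show 0 ≤ N * x ^ (1 : ℝ) by positivity]

lemma mul_add_rpow_neg_mul_at_optimum {α a C : ℝ} (hα : 0 < α) (ha : 0 < a) (hC : 0 < C) :
    (α * C / a) ^ (1 / (1 + α)) * a + ((α * C / a) ^ (1 / (1 + α))) ^ (-α) * C =
      (α ^ (1 / (1 + α)) + α ^ (-α / (1 + α))) * C ^ (1 / (1 + α)) * a ^ (α / (1 + α)) := by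
  have hN : 0 < α * C / a := by positivity
  have hfirst : (α * C / a) ^ (1 / (1 + α)) * a =
      α ^ (1 / (1 + α)) * C ^ (1 / (1 + α)) * a ^ (α / (1 + α)) := by
    apply Real.log_injOn_pos (Set.mem_Ioi.2 (by positivity)) (Set.mem_Ioi.2 (by positivity))
    rw [Real.log_mul (by positivity) ha.ne', Real.log_rpow hN, Real.log_div (by positivity) ha.ne',
      Real.log_mul hα.ne' hC.ne', Real.log_mul (by positivity) (by positivity),
      Real.log_mul (by positivity) (by positivity), Real.log_rpow hα, Real.log_rpow hC,
      Real.log_rpow ha]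
    field_simp
    ring
  have hsecond : ((α * C / a) ^ (1 / (1 + α))) ^ (-α) * C =
      α ^ (-α / (1 + α)) * C ^ (1 / (1 + α)) * a ^ (α / (1 + α)) := by
    apply Real.log_injOn_pos (Set.mem_Ioi.2 (by positivity)) (Set.mem_Ioi.2 (by positivity))
    rw [Real.log_mul (by positivity) hC.ne', Real.log_rpow (by positivity), Real.log_rpow hN,
      Real.log_div (by positivity) ha.ne', Real.log_mul hα.ne' hC.ne',
      Real.log_mul (by positivity) (by positivity), Real.log_mul (by positivity) (by positivity),
      Real.log_rpow hα, Real.log_rpow hC, Real.log_rpow ha]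
    field_simp
    ring
  rw [hfirst, hsecond]
  ring

lemma le_of_forall_le_mul_add_rpow_neg_mul {α a C x : ℝ} (hα : 0 < α) (ha : 0 ≤ a) (hC : 0 ≤ C)
    (h : ∀ N, 0 < N → x ≤ N * a + N ^ (-α) * C) :
    x ≤ (α ^ (1 / (1 + α)) + α ^ (-α / (1 + α))) * C ^ (1 / (1 + α)) * a ^ (α / (1 + α)) := by
  set F : ℝ → ℝ := fun ε =>
    (α ^ (1 / (1 + α)) + α ^ (-α / (1 + α))) * (C + ε) ^ (1 / (1 + α)) * (a + ε) ^ (α / (1 + α))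
  -- optimise for the perturbed data `a + ε, C + ε`, which are positive, then let `ε → 0`
  have hF : ∀ ε, 0 < ε → x ≤ F ε := by
    intro ε hε
    set N := (α * (C + ε) / (a + ε)) ^ (1 / (1 + α))
    have hN : 0 < N := by positivity
    calc x ≤ N * a + N ^ (-α) * C := h N hN
      _ ≤ N * (a + ε) + N ^ (-α) * (C + ε) := by gcongr <;> linarith
      _ = F ε := mul_add_rpow_neg_mul_at_optimum hα (by positivity) (by positivity)
  have hFcont : Continuous F := by
    have h1 := Real.continuous_rpow_const (q := 1 / (1 + α)) (by positivity)
    have h2 := Real.continuous_rpow_const (q := α / (1 + α)) (by positivity)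
    fun_prop
  have hlim : Tendsto F (𝓝[>] 0) (𝓝 (F 0)) := (hFcont.tendsto 0).mono_left nhdsWithin_le_nhds
  simpa [F] using ge_of_tendsto hlim (eventually_nhdsWithin_of_forall hF)

lemma ENNReal.le_of_forall_le_ofReal_mul_add_rpow_neg_mul {α B : ℝ} {x a : ℝ≥0∞} (hα : 0 < α)
    (hB : 0 ≤ B) (ha : a ≠ ⊤)
    (h : ∀ N : ℝ, 0 < N → x ≤ ENNReal.ofReal N * a + ENNReal.ofReal (N ^ (-α)) * ENNReal.ofReal B) :
    x ≤ ENNReal.ofReal ((α ^ (1 / (1 + α)) + α ^ (-α / (1 + α))) * B ^ (1 / (1 + α))) *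
      a ^ (α / (1 + α)) := by
  have hreal : ∀ N : ℝ, 0 < N → x ≤ ENNReal.ofReal (N * a.toReal + N ^ (-α) * B) := by
    intro N hN
    rw [ENNReal.ofReal_add (by positivity) (by positivity), ENNReal.ofReal_mul hN.le,
      ENNReal.ofReal_mul (by positivity), ENNReal.ofReal_toReal ha]
    exact h N hN
  have hx : x ≠ ⊤ := ne_top_of_le_ne_top ENNReal.ofReal_ne_top (hreal 1 one_pos)
  rw [← ENNReal.ofReal_toReal hx, ← ENNReal.ofReal_toReal ha,
    ENNReal.ofReal_rpow_of_nonneg ENNReal.toReal_nonneg (by positivity),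
    ← ENNReal.ofReal_mul (by positivity)]
  exact ENNReal.ofReal_le_ofReal <|
    le_of_forall_le_mul_add_rpow_neg_mul hα ENNReal.toReal_nonneg hB fun N hN =>
      ENNReal.toReal_le_of_le_ofReal (by positivity) (hreal N hN)

namespace IsCouplingN

variable {π : ℕ → ℕ → ℝ} {f g : ℕ → ℝ}

lemma of_isProbN (hf : IsProbN f) (hg : IsProbN g) : IsCouplingN (fun i j => f i * g j) f g := by
  refine ⟨fun i j => mul_nonneg (hf.1 i) (hg.1 j), fun i => ?_, fun j => ?_⟩
  · simpa using hg.2.mul_left (f i)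
  · simpa [mul_comm] using hf.2.mul_left (g j)

lemma nonneg_fst (h : IsCouplingN π f g) (i : ℕ) : 0 ≤ f i :=
  (h.2.1 i).nonneg fun j => h.1 i j

lemma nonneg_snd (h : IsCouplingN π f g) (j : ℕ) : 0 ≤ g j :=
  (h.2.2 j).nonneg fun i => h.1 i j

lemma tsum_tsum_ofReal_mul_fst (h : IsCouplingN π f g) {c : ℕ → ℝ} (hc : ∀ i, 0 ≤ c i)
    (hcf : Summable fun i => c i * f i) :
    ∑' (i : ℕ) (j : ℕ), ENNReal.ofReal (π i j) * ENNReal.ofReal (c i) =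
      ENNReal.ofReal (∑' i, c i * f i) := by
  rw [ENNReal.ofReal_tsum_of_nonneg (fun i => mul_nonneg (hc i) (h.nonneg_fst i)) hcf]
  refine tsum_congr fun i => ?_
  rw [ENNReal.tsum_mul_right, ← ENNReal.ofReal_tsum_of_nonneg (h.1 i) (h.2.1 i).summable,
    (h.2.1 i).tsum_eq, ENNReal.ofReal_mul (hc i), mul_comm]

lemma tsum_tsum_ofReal_mul_snd (h : IsCouplingN π f g) {c : ℕ → ℝ} (hc : ∀ j, 0 ≤ c j)
    (hcg : Summable fun j => c j * g j) :
    ∑' (i : ℕ) (j : ℕ), ENNReal.ofReal (π i j) * ENNReal.ofReal (c j) =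
      ENNReal.ofReal (∑' j, c j * g j) := by
  rw [ENNReal.ofReal_tsum_of_nonneg (fun j => mul_nonneg (hc j) (h.nonneg_snd j)) hcg,
    ENNReal.tsum_comm]
  refine tsum_congr fun j => ?_
  rw [ENNReal.tsum_mul_right, ← ENNReal.ofReal_tsum_of_nonneg (fun i => h.1 i j)
    (h.2.2 j).summable, (h.2.2 j).tsum_eq, ENNReal.ofReal_mul (hc j), mul_comm]

lemma couplingCost_le_moments (h : IsCouplingN π f g) {p : ℝ} (hp : 0 ≤ p)
    (hf : Summable fun n : ℕ => (n : ℝ) ^ p * f n) (hg : Summable fun n : ℕ => (n : ℝ) ^ p * g n) :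
    couplingCost p π ≤
      ENNReal.ofReal (∑' n : ℕ, (n : ℝ) ^ p * f n) +
        ENNReal.ofReal (∑' n : ℕ, (n : ℝ) ^ p * g n) := by
  have hpow : ∀ n : ℕ, 0 ≤ (n : ℝ) ^ p := fun n => by positivity
  rw [← h.tsum_tsum_ofReal_mul_fst hpow hf, ← h.tsum_tsum_ofReal_mul_snd hpow hg,
    ← ENNReal.tsum_add]
  refine ENNReal.tsum_le_tsum fun i => ?_
  rw [← ENNReal.tsum_add]
  refine ENNReal.tsum_le_tsum fun j => ?_
  rw [← mul_add, ← ENNReal.ofReal_add (hpow i) (hpow j)]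
  gcongr
  exact abs_sub_rpow_le_rpow_add_rpow (Nat.cast_nonneg i) (Nat.cast_nonneg j) hp

lemma couplingCost_le_two_rpow_mul_max (h : IsCouplingN π f g) {p : ℝ} (hp : 1 ≤ p)
    (hf : Summable fun n : ℕ => (n : ℝ) ^ p * f n) (hg : Summable fun n : ℕ => (n : ℝ) ^ p * g n) :
    couplingCost p π ≤
      ENNReal.ofReal (2 ^ p * max (∑' n : ℕ, (n : ℝ) ^ p * f n) (∑' n : ℕ, (n : ℝ) ^ p * g n)) := by
  set Mf := ∑' n : ℕ, (n : ℝ) ^ p * f n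
  set Mg := ∑' n : ℕ, (n : ℝ) ^ p * g n
  have hMf : 0 ≤ Mf := tsum_nonneg fun n => mul_nonneg (by positivity) (h.nonneg_fst n)
  have hMg : 0 ≤ Mg := tsum_nonneg fun n => mul_nonneg (by positivity) (h.nonneg_snd n)
  have htwo : (2 : ℝ) ≤ 2 ^ p := by simpa using Real.rpow_le_rpow_of_exponent_le one_le_two hp
  refine (h.couplingCost_le_moments (by linarith) hf hg).trans ?_
  rw [← ENNReal.ofReal_add hMf hMg]
  refine ENNReal.ofReal_le_ofReal ?_
  nlinarith [le_max_left Mf Mg, le_max_right Mf Mg]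

end IsCouplingN

lemma couplingCost_mono {p q : ℝ} (hp : 0 < p) (hpq : p ≤ q) (π : ℕ → ℕ → ℝ) :
    couplingCost p π ≤ couplingCost q π :=
  ENNReal.tsum_le_tsum fun i => ENNReal.tsum_le_tsum fun j =>
    mul_le_mul_right (ENNReal.ofReal_le_ofReal (abs_natCast_sub_rpow_le_rpow hp hpq i j)) _

lemma couplingCost_two_le {α N : ℝ} (hα : 0 < α) (hN : 0 < N) (π : ℕ → ℕ → ℝ) :
    couplingCost 2 π ≤
      ENNReal.ofReal N * couplingCost 1 π + ENNReal.ofReal (N ^ (-α)) * couplingCost (2 + α) π := by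
  simp only [couplingCost, ← ENNReal.tsum_mul_left, ← ENNReal.tsum_add]
  refine ENNReal.tsum_le_tsum fun i => ENNReal.tsum_le_tsum fun j => ?_
  have hsplit : ENNReal.ofReal (|(i : ℝ) - j| ^ (2 : ℝ)) ≤
      ENNReal.ofReal N * ENNReal.ofReal (|(i : ℝ) - j| ^ (1 : ℝ)) +
        ENNReal.ofReal (N ^ (-α)) * ENNReal.ofReal (|(i : ℝ) - j| ^ (2 + α)) := by
    rw [← ENNReal.ofReal_mul hN.le, ← ENNReal.ofReal_mul (by positivity),
      ← ENNReal.ofReal_add (by positivity) (by positivity)]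
    exact ENNReal.ofReal_le_ofReal (rpow_two_le_mul_add_rpow_neg_mul (abs_nonneg _) hN hα)
  calc _ ≤ ENNReal.ofReal (π i j) * (ENNReal.ofReal N * ENNReal.ofReal (|(i : ℝ) - j| ^ (1 : ℝ)) +
        ENNReal.ofReal (N ^ (-α)) * ENNReal.ofReal (|(i : ℝ) - j| ^ (2 + α))) :=
        mul_le_mul_right hsplit _
    _ = _ := by ring

lemma optimalCostN_two_le {α N : ℝ} {B : ℝ≥0∞} {f g : ℕ → ℝ} (hα : 0 < α) (hN : 0 < N)
    (hB : ∀ π, IsCouplingN π f g → couplingCost (2 + α) π ≤ B) :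
    optimalCostN 2 f g ≤ ENNReal.ofReal N * optimalCostN 1 f g + ENNReal.ofReal (N ^ (-α)) * B := by
  rw [optimalCostN, optimalCostN, ENNReal.mul_iInf_of_ne (by positivity) ENNReal.ofReal_ne_top,
    ENNReal.iInf_add]
  refine iInf_mono fun π => (couplingCost_two_le hα hN π.1).trans ?_
  gcongr
  exact hB π.1 π.2

lemma wassersteinN_two_sq (f g : ℕ → ℝ) : WassersteinN 2 f g ^ 2 = optimalCostN 2 f g := by
  rw [wassersteinN_eq_optimalCostN_rpow, ← ENNReal.rpow_natCast, ← ENNReal.rpow_mul]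
  norm_num

lemma wassersteinN_one (f g : ℕ → ℝ) : WassersteinN 1 f g = optimalCostN 1 f g := by
  rw [wassersteinN_eq_optimalCostN_rpow, div_one, ENNReal.rpow_one]

/-- For `α > 0` and probability distributions `f, g` on `ℕ` with
finite moments of order `2 + α`, setting
`m_{2+α} := max{∑ n^{2+α} fₙ, ∑ n^{2+α} gₙ}`, one has
`W₂(f,g)² ≤ 2^{(2+α)/(1+α)} (α^{1/(1+α)} + α^{-α/(1+α)}) · m_{2+α}^{1/(1+α)} · W₁(f,g)^{α/(1+α)}`. -/
theorem wasserstein_two_sq_le_wasserstein_one (α : ℝ) (hα : 0 < α) (f g : ℕ → ℝ)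
    (hf : IsProbN f) (hg : IsProbN g)
    (hf2 : Summable fun n : ℕ => (n : ℝ) ^ (2 + α) * f n)
    (hg2 : Summable fun n : ℕ => (n : ℝ) ^ (2 + α) * g n) :
    WassersteinN 2 f g ^ 2 ≤
      ENNReal.ofReal
          ((2 : ℝ) ^ ((2 + α) / (1 + α)) * (α ^ (1 / (1 + α)) + α ^ (-α / (1 + α))) *
            (max (∑' n : ℕ, (n : ℝ) ^ (2 + α) * f n) (∑' n : ℕ, (n : ℝ) ^ (2 + α) * g n)) ^
              (1 / (1 + α))) *
        WassersteinN 1 f g ^ (α / (1 + α)) := by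
  have hB : ∀ π, IsCouplingN π f g → couplingCost (2 + α) π ≤ ENNReal.ofReal (2 ^ (2 + α) *
      max (∑' n : ℕ, (n : ℝ) ^ (2 + α) * f n) (∑' n : ℕ, (n : ℝ) ^ (2 + α) * g n)) :=
    fun π hπ => hπ.couplingCost_le_two_rpow_mul_max (by linarith) hf2 hg2
  have hprod := IsCouplingN.of_isProbN hf hg
  have hW1 : optimalCostN 1 f g ≠ ⊤ :=
    ne_top_of_le_ne_top ENNReal.ofReal_ne_top <| (iInf_le _ ⟨_, hprod⟩).trans <|
      (couplingCost_mono one_pos (by linarith) _).trans (hB _ hprod)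
  have hM : 0 ≤ max (∑' n : ℕ, (n : ℝ) ^ (2 + α) * f n) (∑' n : ℕ, (n : ℝ) ^ (2 + α) * g n) :=
    le_max_of_le_left <| tsum_nonneg fun n => mul_nonneg (by positivity) (hf.1 n)
  have key := ENNReal.le_of_forall_le_ofReal_mul_add_rpow_neg_mul hα (by positivity) hW1
    fun N hN => optimalCostN_two_le hα hN hB
  rw [wassersteinN_two_sq, wassersteinN_one]
  convert key using 3
  rw [Real.mul_rpow (by positivity) hM, ← Real.rpow_mul zero_le_two, mul_one_div]
  ring

end
end
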